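/- arXiv:2602.19950 — 7 statements merged into one kernel-verified Lean document; each statement's English description precedes it below -/
import Mathlib

section
/- Let X be a finite set, let ≻1 and ≻2 be preferences on X that are k-compatible for some 0 ≤ k ≤ |X|, and let ≻1', ≻2' be their k-conjugates. Then the distribution placing probability 1/2 on each of ≻1, ≻2 and the distribution placing probability 1/2 on each of ≻1', ≻2' are observationally equivalent. -/
open scoped Classical

namespace Stmt0

variable {X : Type*} [Fintype X] [DecidableEq X]

/-- A preference on the finite set `X`, encoded by its ranking: position `0` is the most
preferred alternative, position `1` the second most preferred, and so on.  Such rankings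
are in bijective correspondence with linear orders (complete, transitive, antisymmetric
relations) on `X`. -/
abbrev Pref (X : Type*) [Fintype X] := Fin (Fintype.card X) ≃ X

/-- `x` is the `σ`-maximal element of the menu `A`. -/
def IsMaxIn (σ : Pref X) (A : Finset X) (x : X) : Prop :=
  x ∈ A ∧ ∀ y ∈ A, σ.symm x ≤ σ.symm y

/-- The probability that `x` is chosen from `A` under the measure `μ` over preferences:
the `μ`-mass of the set of preferences for which `x` is maximal in `A`. -/
noncomputable def choiceProb (μ : Pref X → ℝ) (A : Finset X) (x : X) : ℝ :=
  ∑ σ : Pref X, if IsMaxIn σ A x then μ σ else 0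

/-- Two measures over preferences are observationally equivalent if they induce identical
choice probabilities on every nonempty menu. -/
def ObsEquiv (μ ν : Pref X → ℝ) : Prop :=
  ∀ A : Finset X, A.Nonempty → ∀ x ∈ A, choiceProb μ A x = choiceProb ν A x

/-- Two preferences are `k`-compatible if they have the same set of `k` best alternatives
(possibly ranked differently). -/
def Compatible (k : ℕ) (σ₁ σ₂ : Pref X) : Prop :=
  ∀ x : X, ((σ₁.symm x : ℕ) < k ↔ (σ₂.symm x : ℕ) < k)

/-- `σ₁'` and `σ₂'` are the `k`-conjugates of `σ₁` and `σ₂`: `σ₁'` is the concatenation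
of the `k`-initial segment of `σ₁` with the `k`-terminal segment of `σ₂`, and `σ₂'` that
of the `k`-initial segment of `σ₂` with the `k`-terminal segment of `σ₁`. -/
def IsConjPair (k : ℕ) (σ₁ σ₂ σ₁' σ₂' : Pref X) : Prop :=
  (∀ i : Fin (Fintype.card X), σ₁' i = if (i : ℕ) < k then σ₁ i else σ₂ i) ∧
  (∀ i : Fin (Fintype.card X), σ₂' i = if (i : ℕ) < k then σ₂ i else σ₁ i)

/-- Characterization of the inverse of a conjugate preference. -/
lemma conj_symm (σ τ σ' : Pref X) (k : ℕ)
    (h : ∀ i : Fin (Fintype.card X), σ' i = if (i : ℕ) < k then σ i else τ i)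
    (hc : ∀ x : X, ((σ.symm x : ℕ) < k ↔ (τ.symm x : ℕ) < k)) (x : X) :
    σ'.symm x = if (σ.symm x : ℕ) < k then σ.symm x else τ.symm x := by
  split_ifs with hlt
  · rw [Equiv.symm_apply_eq, h, if_pos hlt, Equiv.apply_symm_apply]
  · rw [Equiv.symm_apply_eq, h, if_neg (fun hh => hlt ((hc x).mpr hh)),
      Equiv.apply_symm_apply]

/-- If the menu meets the common top-`k` set, the conjugate has the same maximum. -/
lemma max_iff_of_hit (σ τ σ' : Pref X) (k : ℕ)
    (h : ∀ i : Fin (Fintype.card X), σ' i = if (i : ℕ) < k then σ i else τ i)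
    (hc : ∀ x : X, ((σ.symm x : ℕ) < k ↔ (τ.symm x : ℕ) < k))
    (A : Finset X) (a : X) (ha : a ∈ A) (halt : (σ.symm a : ℕ) < k) (x : X) :
    IsMaxIn σ A x ↔ IsMaxIn σ' A x := by
  have e : ∀ y : X, σ'.symm y = if (σ.symm y : ℕ) < k then σ.symm y else τ.symm y :=
    conj_symm σ τ σ' k h hc
  constructor
  · rintro ⟨hx, hmax⟩
    have hxlt : (σ.symm x : ℕ) < k :=
      lt_of_le_of_lt (Fin.le_def.mp (hmax a ha)) halt
    have hex : σ'.symm x = σ.symm x := by rw [e, if_pos hxlt]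
    refine ⟨hx, fun y hy => ?_⟩
    rw [Fin.le_def, hex]
    rw [e y]
    split_ifs with hy'
    · exact Fin.le_def.mp (hmax y hy)
    · have hτ : ¬ (τ.symm y : ℕ) < k := fun hh => hy' ((hc y).mpr hh)
      omega
  · rintro ⟨hx, hmax⟩
    have hea : σ'.symm a = σ.symm a := by rw [e, if_pos halt]
    have hx' : (σ'.symm x : ℕ) < k := by
      have := Fin.le_def.mp (hmax a ha)
      rw [hea] at this; omega
    have hxlt : (σ.symm x : ℕ) < k := by
      by_contra hh
      have hτ : ¬ (τ.symm x : ℕ) < k := fun h2 => hh ((hc x).mpr h2)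
      rw [e, if_neg hh] at hx'
      exact hτ hx'
    have hex : σ'.symm x = σ.symm x := by rw [e, if_pos hxlt]
    refine ⟨hx, fun y hy => ?_⟩
    rw [Fin.le_def]
    by_cases hy' : (σ.symm y : ℕ) < k
    · have := Fin.le_def.mp (hmax y hy)
      rw [hex, e y, if_pos hy'] at this
      exact this
    · omega

/-- If the menu misses the common top-`k` set, the conjugate behaves like `τ`. -/
lemma max_iff_of_miss (σ τ σ' : Pref X) (k : ℕ)
    (h : ∀ i : Fin (Fintype.card X), σ' i = if (i : ℕ) < k then σ i else τ i)
    (hc : ∀ x : X, ((σ.symm x : ℕ) < k ↔ (τ.symm x : ℕ) < k))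
    (A : Finset X) (hmiss : ∀ a ∈ A, ¬ (σ.symm a : ℕ) < k) (x : X) :
    IsMaxIn τ A x ↔ IsMaxIn σ' A x := by
  have e : ∀ y ∈ A, σ'.symm y = τ.symm y := fun y hy => by
    rw [conj_symm σ τ σ' k h hc, if_neg (hmiss y hy)]
  constructor
  · rintro ⟨hx, hmax⟩
    exact ⟨hx, fun y hy => by rw [e x hx, e y hy]; exact hmax y hy⟩
  · rintro ⟨hx, hmax⟩
    exact ⟨hx, fun y hy => by rw [← e x hx, ← e y hy]; exact hmax y hy⟩

lemma choiceProb_point (τ : Pref X) (A : Finset X) (x : X) :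
    choiceProb (fun σ => if σ = τ then (1 : ℝ) else 0) A x
      = if IsMaxIn τ A x then 1 else 0 := by
  unfold choiceProb
  have : ∀ σ : Pref X,
      (if IsMaxIn σ A x then (if σ = τ then (1 : ℝ) else 0) else 0)
        = if σ = τ then (if IsMaxIn τ A x then (1 : ℝ) else 0) else 0 := by
    intro σ; by_cases h : σ = τ <;> simp [h]
  simp_rw [this]
  simp

theorem statement0 (σ₁ σ₂ σ₁' σ₂' : Pref X) (k : ℕ) (hk : k ≤ Fintype.card X)
    (hcomp : Compatible k σ₁ σ₂) (hconj : IsConjPair k σ₁ σ₂ σ₁' σ₂') :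
    ObsEquiv
      (fun σ => (1 / 2 : ℝ) * (if σ = σ₁ then 1 else 0) +
        (1 / 2 : ℝ) * (if σ = σ₂ then 1 else 0))
      (fun σ => (1 / 2 : ℝ) * (if σ = σ₁' then 1 else 0) +
        (1 / 2 : ℝ) * (if σ = σ₂' then 1 else 0)) := by
  intro A hA x hx
  have expand : ∀ τ₁ τ₂ : Pref X,
      choiceProb (fun σ => (1 / 2 : ℝ) * (if σ = τ₁ then 1 else 0) +
        (1 / 2 : ℝ) * (if σ = τ₂ then 1 else 0)) A x
      = (1 / 2 : ℝ) * (if IsMaxIn τ₁ A x then 1 else 0) +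
        (1 / 2 : ℝ) * (if IsMaxIn τ₂ A x then 1 else 0) := by
    intro τ₁ τ₂
    rw [← choiceProb_point τ₁ A x, ← choiceProb_point τ₂ A x]
    unfold choiceProb
    rw [Finset.mul_sum, Finset.mul_sum, ← Finset.sum_add_distrib]
    apply Finset.sum_congr rfl
    intro σ _
    split_ifs <;> ring
  rw [expand, expand]
  have hc2 : ∀ y : X, ((σ₂.symm y : ℕ) < k ↔ (σ₁.symm y : ℕ) < k) :=
    fun y => (hcomp y).symm
  by_cases hcase : ∃ a ∈ A, (σ₁.symm a : ℕ) < k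
  · obtain ⟨a, ha, halt⟩ := hcase
    rw [← max_iff_of_hit σ₁ σ₂ σ₁' k hconj.1 hcomp A a ha halt x,
      ← max_iff_of_hit σ₂ σ₁ σ₂' k hconj.2 hc2 A a ha ((hcomp a).mp halt) x]
  · push_neg at hcase
    have hmiss1 : ∀ a ∈ A, ¬ (σ₁.symm a : ℕ) < k := fun a ha h => by
      have := hcase a ha; omega
    have hmiss2 : ∀ a ∈ A, ¬ (σ₂.symm a : ℕ) < k := fun a ha h =>
      hmiss1 a ha ((hcomp a).mpr h)
    rw [← max_iff_of_miss σ₁ σ₂ σ₁' k hconj.1 hcomp A hmiss1 x,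
      ← max_iff_of_miss σ₂ σ₁ σ₂' k hconj.2 hc2 A hmiss2 x]
    ring

end Stmt0
end

section
/- Two distributions μ, μ' ∈ Δ(ℒ) over preferences on a finite set X are observationally equivalent if and only if μ − μ' lies in the Ryser subspace ℛ. In particular, for any μ ∈ M ⊆ Δ(ℒ), the set of distributions in M observationally equivalent to μ is exactly (μ + ℛ) ∩ M. -/
open scoped Classical

namespace Stmt1

variable {X : Type*} [Fintype X] [DecidableEq X]

/-- A preference on the finite set `X`, encoded by its ranking: position `0` is the most
preferred alternative, and so on. -/
abbrev Pref (X : Type*) [Fintype X] := Fin (Fintype.card X) ≃ X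

/-- `x` is the `σ`-maximal element of the menu `A`. -/
def IsMaxIn (σ : Pref X) (A : Finset X) (x : X) : Prop :=
  x ∈ A ∧ ∀ y ∈ A, σ.symm x ≤ σ.symm y

/-- The probability that `x` is chosen from `A` under the measure `μ` over preferences. -/
noncomputable def choiceProb (μ : Pref X → ℝ) (A : Finset X) (x : X) : ℝ :=
  ∑ σ : Pref X, if IsMaxIn σ A x then μ σ else 0

/-- Observational equivalence: identical choice probabilities on every nonempty menu. -/
def ObsEquiv (μ ν : Pref X → ℝ) : Prop :=
  ∀ A : Finset X, A.Nonempty → ∀ x ∈ A, choiceProb μ A x = choiceProb ν A x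

/-- `μ` is a probability distribution over preferences. -/
def IsDist (μ : Pref X → ℝ) : Prop :=
  (∀ σ, 0 ≤ μ σ) ∧ ∑ σ : Pref X, μ σ = 1

/-- Two preferences are `k`-compatible if they have the same set of `k` best alternatives. -/
def Compatible (k : ℕ) (σ₁ σ₂ : Pref X) : Prop :=
  ∀ x : X, ((σ₁.symm x : ℕ) < k ↔ (σ₂.symm x : ℕ) < k)

/-- `σ₁'` and `σ₂'` are the `k`-conjugates of `σ₁` and `σ₂`. -/
def IsConjPair (k : ℕ) (σ₁ σ₂ σ₁' σ₂' : Pref X) : Prop :=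
  (∀ i : Fin (Fintype.card X), σ₁' i = if (i : ℕ) < k then σ₁ i else σ₂ i) ∧
  (∀ i : Fin (Fintype.card X), σ₂' i = if (i : ℕ) < k then σ₂ i else σ₁ i)

/-- The indicator (point mass) vector of a preference. -/
noncomputable def ind (σ₀ : Pref X) : Pref X → ℝ := fun σ => if σ = σ₀ then 1 else 0

/-- The set of Ryser swaps: vectors `1_{{σ₁',σ₂'}} - 1_{{σ₁,σ₂}}` where `σ₁, σ₂` are
`k`-compatible with `k`-conjugates `σ₁', σ₂'`. -/
def RyserSwaps (X : Type*) [Fintype X] [DecidableEq X] : Set (Pref X → ℝ) :=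
  {R | ∃ k ≤ Fintype.card X, ∃ σ₁ σ₂ σ₁' σ₂' : Pref X,
    Compatible k σ₁ σ₂ ∧ IsConjPair k σ₁ σ₂ σ₁' σ₂' ∧
    R = ind σ₁' + ind σ₂' - ind σ₁ - ind σ₂}

/-- The Ryser subspace: the linear span of all Ryser swaps. -/
noncomputable def RyserSpace (X : Type*) [Fintype X] [DecidableEq X] :
    Submodule ℝ (Pref X → ℝ) :=
  Submodule.span ℝ (RyserSwaps X)


set_option linter.unusedSectionVars false
set_option maxHeartbeats 1000000

noncomputable section

/-- weighted sum over preferences satisfying `P` -/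
def wsum (P : Pref X → Prop) (δ : Pref X → ℝ) : ℝ := ∑ σ : Pref X, if P σ then δ σ else 0

lemma wsum_add (P : Pref X → Prop) (δ ν : Pref X → ℝ) :
    wsum P (δ + ν) = wsum P δ + wsum P ν := by
  simp only [wsum, ← Finset.sum_add_distrib]
  exact Finset.sum_congr rfl fun σ _ => by split <;> simp

lemma wsum_sub (P : Pref X → Prop) (δ ν : Pref X → ℝ) :
    wsum P (δ - ν) = wsum P δ - wsum P ν := by
  simp only [wsum, ← Finset.sum_sub_distrib]
  exact Finset.sum_congr rfl fun σ _ => by split <;> simp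

lemma wsum_smul (P : Pref X → Prop) (c : ℝ) (δ : Pref X → ℝ) :
    wsum P (c • δ) = c * wsum P δ := by
  simp only [wsum, Finset.mul_sum]
  exact Finset.sum_congr rfl fun σ _ => by split <;> simp

lemma wsum_zero (P : Pref X → Prop) : wsum P (0 : Pref X → ℝ) = 0 := by
  simp [wsum]

lemma wsum_ind (P : Pref X → Prop) (τ : Pref X) :
    wsum P (ind τ) = if P τ then 1 else 0 := by
  rw [wsum]
  rw [Finset.sum_congr rfl (fun σ _ => show (if P σ then ind τ σ else 0) = if σ = τ then (if P τ then 1 else 0) else 0 by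
    by_cases h : σ = τ
    · subst h; simp [ind]
    · simp [ind, h])]
  simp

def bool01 (Q : Prop) : ℝ := if Q then 1 else 0

lemma wsum_ind' (P : Pref X → Prop) (τ : Pref X) :
    wsum P (ind τ) = bool01 (P τ) := wsum_ind P τ

lemma wsum_congr (P Q : Pref X → Prop) (h : ∀ σ, P σ ↔ Q σ) (δ : Pref X → ℝ) :
    wsum P δ = wsum Q δ := by
  unfold wsum
  exact Finset.sum_congr rfl fun σ _ => if_congr (h σ) rfl rfl


def aboveSet (σ : Pref X) (x : X) : Finset X :=
  Finset.univ.filter (fun y => σ.symm y < σ.symm x)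

lemma mem_aboveSet {σ : Pref X} {x y : X} :
    y ∈ aboveSet σ x ↔ σ.symm y < σ.symm x := by simp [aboveSet]

def topset (k : ℕ) (σ : Pref X) : Finset X :=
  Finset.univ.filter (fun y => (σ.symm y : ℕ) < k)

lemma mem_topset {k : ℕ} {σ : Pref X} {y : X} :
    y ∈ topset k σ ↔ (σ.symm y : ℕ) < k := by simp [topset]

lemma topset_card {k : ℕ} (hk : k ≤ Fintype.card X) (σ : Pref X) :
    (topset k σ).card = k := by
  classical
  have : topset k σ = (Finset.univ.filter (fun i : Fin (Fintype.card X) => (i : ℕ) < k)).image σ := by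
    ext y
    simp only [mem_topset, Finset.mem_image, Finset.mem_filter, Finset.mem_univ, true_and]
    constructor
    · intro h; exact ⟨σ.symm y, h, σ.apply_symm_apply y⟩
    · rintro ⟨i, hi, rfl⟩; simpa using hi
  rw [this, Finset.card_image_of_injective _ σ.injective]
  apply Finset.card_eq_of_bijective (fun i h => (⟨i, lt_of_lt_of_le h hk⟩ : Fin (Fintype.card X)))
  · intro a ha
    simp only [Finset.mem_filter, Finset.mem_univ, true_and] at ha
    exact ⟨a, ha, rfl⟩
  · intro i h; simp [h]
  · intro i j hi hj hij
    simpa using congrArg Fin.val hij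


lemma symm_eq {σ : Pref X} {i : Fin (Fintype.card X)} {x : X} (h : σ i = x) : σ.symm x = i := by
  rw [← h, Equiv.symm_apply_apply]

/-- conjugate preserves above-sets for top alternatives -/
lemma aboveSet_conj_top {k : ℕ} {σ₁ σ₂ σ₁' : Pref X}
    (hP : ∀ i : Fin (Fintype.card X), σ₁' i = if (i : ℕ) < k then σ₁ i else σ₂ i)
    {x : X} (hx : (σ₁.symm x : ℕ) < k) :
    aboveSet σ₁' x = aboveSet σ₁ x := by
  have hpx : σ₁'.symm x = σ₁.symm x := symm_eq (by rw [hP]; simp [hx])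
  ext y
  simp only [mem_aboveSet, hpx]
  constructor
  · intro hy
    have hq : ((σ₁'.symm y : ℕ) < k) := lt_of_lt_of_le hy (le_of_lt hx)
    have : σ₁ (σ₁'.symm y) = y := by
      have := hP (σ₁'.symm y)
      rw [if_pos hq] at this
      rw [← this, Equiv.apply_symm_apply]
    rw [symm_eq this]
    exact hy
  · intro hy
    have hq : ((σ₁.symm y : ℕ) < k) := lt_of_lt_of_le hy (le_of_lt hx)
    have : σ₁' (σ₁.symm y) = y := by rw [hP, if_pos hq, Equiv.apply_symm_apply]
    rw [symm_eq this]
    exact hy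

/-- conjugate above-sets for bottom alternatives come from the other order -/
lemma aboveSet_conj_bot {k : ℕ} {σ₁ σ₂ σ₁' : Pref X}
    (hC : ∀ y : X, ((σ₁.symm y : ℕ) < k ↔ (σ₂.symm y : ℕ) < k))
    (hP : ∀ i : Fin (Fintype.card X), σ₁' i = if (i : ℕ) < k then σ₁ i else σ₂ i)
    {x : X} (hx : ¬ (σ₁.symm x : ℕ) < k) :
    aboveSet σ₁' x = aboveSet σ₂ x := by
  have hx2 : ¬ (σ₂.symm x : ℕ) < k := fun h => hx ((hC x).2 h)
  have hpx : σ₁'.symm x = σ₂.symm x := symm_eq (by rw [hP, if_neg hx2, Equiv.apply_symm_apply])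
  have hkp : k ≤ (σ₂.symm x : ℕ) := le_of_not_gt hx2
  ext y
  simp only [mem_aboveSet, hpx, Fin.lt_def]
  constructor
  · intro hy
    by_cases hq : ((σ₁'.symm y : ℕ) < k)
    · have : σ₁ (σ₁'.symm y) = y := by
        have := hP (σ₁'.symm y); rw [if_pos hq] at this
        rw [← this, Equiv.apply_symm_apply]
      have h1 : (σ₁.symm y : ℕ) < k := by rw [symm_eq this]; exact hq
      exact lt_of_lt_of_le ((hC y).1 h1) hkp
    · have : σ₂ (σ₁'.symm y) = y := by
        have := hP (σ₁'.symm y); rw [if_neg hq] at this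
        rw [← this, Equiv.apply_symm_apply]
      rw [symm_eq this]
      exact hy
  · intro hy
    by_cases hq : ((σ₂.symm y : ℕ) < k)
    · have h1 : (σ₁.symm y : ℕ) < k := (hC y).2 hq
      have : σ₁' (σ₁.symm y) = y := by rw [hP, if_pos h1, Equiv.apply_symm_apply]
      rw [symm_eq this]
      exact lt_of_lt_of_le h1 hkp
    · have : σ₁' (σ₂.symm y) = y := by rw [hP, if_neg hq, Equiv.apply_symm_apply]
      rw [symm_eq this]
      exact hy


/-- the key identified statistic -/
def Gsum (δ : Pref X → ℝ) (x : X) (B : Finset X) : ℝ := wsum (fun σ => aboveSet σ x = B) δ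

lemma gsum_swap {R : Pref X → ℝ} (hR : R ∈ RyserSwaps X) (x : X) (B : Finset X) :
    Gsum R x B = 0 := by
  obtain ⟨k, hk, σ₁, σ₂, σ₁', σ₂', hC, hP, rfl⟩ := hR
  have hC' : ∀ y : X, ((σ₂.symm y : ℕ) < k ↔ (σ₁.symm y : ℕ) < k) := fun y => (hC y).symm
  simp only [Gsum, wsum_sub, wsum_add, wsum_ind]
  by_cases hx : (σ₁.symm x : ℕ) < k
  · rw [aboveSet_conj_top hP.1 hx, aboveSet_conj_top hP.2 ((hC x).1 hx)]
    ring
  · rw [aboveSet_conj_bot hC hP.1 hx, aboveSet_conj_bot hC' hP.2 (fun h => hx ((hC x).2 h))]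
    ring

lemma gsum_ryser {r : Pref X → ℝ} (hr : r ∈ RyserSpace X) (x : X) (B : Finset X) :
    Gsum r x B = 0 := by
  induction hr using Submodule.span_induction with
  | mem R hR => exact gsum_swap hR x B
  | zero => simp [Gsum, wsum_zero]
  | add a b _ _ ha hb => rw [Gsum, wsum_add, ← Gsum, ← Gsum, ha, hb, add_zero]
  | smul c a _ ha => rw [Gsum, wsum_smul, ← Gsum, ha, mul_zero]

lemma isMaxIn_iff {σ : Pref X} {A : Finset X} {x : X} :
    IsMaxIn σ A x ↔ x ∈ A ∧ aboveSet σ x ⊆ Finset.univ \ A := by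
  unfold IsMaxIn
  apply and_congr_right
  intro _
  constructor
  · intro h y hy
    rw [mem_aboveSet] at hy
    simp only [Finset.mem_sdiff, Finset.mem_univ, true_and]
    intro hyA
    exact absurd (h y hyA) (not_le_of_gt hy)
  · intro h y hyA
    by_contra hlt
    push_neg at hlt
    have := h (mem_aboveSet.2 hlt)
    simp [hyA] at this

lemma choiceProb_eq_wsum (δ : Pref X → ℝ) (A : Finset X) (x : X) :
    choiceProb δ A x = wsum (fun σ => IsMaxIn σ A x) δ := by
  unfold choiceProb wsum
  exact Finset.sum_congr rfl fun σ _ => by split <;> simp_all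

lemma sum_mem_ite (s : Finset (Finset X)) (T : Finset X) (c : ℝ) :
    (∑ B ∈ s, if T = B then c else 0) = if T ∈ s then c else 0 := by
  simp [Finset.sum_ite_eq]

lemma choice_decomp (δ : Pref X → ℝ) (A : Finset X) (x : X) (hx : x ∈ A) :
    choiceProb δ A x = ∑ B ∈ (Finset.univ \ A).powerset, Gsum δ x B := by
  rw [choiceProb_eq_wsum]
  unfold Gsum wsum
  rw [Finset.sum_comm]
  apply Finset.sum_congr rfl
  intro σ _
  beta_reduce
  refine Eq.trans (if_congr (isMaxIn_iff.trans (and_iff_right hx))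
    rfl rfl : (if IsMaxIn σ A x then δ σ else 0) = _) ?_
  refine Eq.trans ?_ (Eq.trans (sum_mem_ite ((Finset.univ \ A).powerset) (aboveSet σ x) (δ σ)).symm ?_)
  · exact if_congr (Finset.mem_powerset).symm rfl rfl
  · exact Finset.sum_congr rfl fun B _ =>
      @if_congr _ _ _ ((aboveSet σ x).decidableEq B) (Classical.propDecidable _) _ _ _ _ Iff.rfl rfl rfl

lemma gsum_of_obs {δ : Pref X → ℝ}
    (h : ∀ A : Finset X, A.Nonempty → ∀ x ∈ A, choiceProb δ A x = 0) (x : X) (B : Finset X) :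
    Gsum δ x B = 0 := by
  induction B using Finset.strongInduction with
  | _ B ih =>
  by_cases hxB : x ∈ B
  · unfold Gsum wsum
    apply Finset.sum_eq_zero
    intro σ _
    rw [if_neg]
    intro hEq
    have hmem : x ∈ aboveSet σ x := hEq ▸ hxB
    rw [mem_aboveSet] at hmem
    exact lt_irrefl _ hmem
  · set A := Finset.univ \ B with hA
    have hxA : x ∈ A := by simp [hA, hxB]
    have hAc : Finset.univ \ A = B := by
      ext y; simp [hA]
    have h0 := h A ⟨x, hxA⟩ x hxA
    rw [choice_decomp δ A x hxA, hAc] at h0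
    rw [← Finset.add_sum_erase _ _ (Finset.mem_powerset_self B)] at h0
    have hz : ∀ B' ∈ (B.powerset).erase B, Gsum δ x B' = 0 := by
      intro B' hB'
      rw [Finset.mem_erase, Finset.mem_powerset] at hB'
      exact ih B' (lt_of_le_of_ne hB'.2 hB'.1)
    rw [Finset.sum_eq_zero hz, add_zero] at h0
    exact h0

lemma wsum_false (δ : Pref X → ℝ) : wsum (fun _ => False) δ = 0 := by simp [wsum]

lemma wsum_unique {P : Pref X → Prop} {τ : Pref X} (h : ∀ σ, P σ ↔ σ = τ) (δ : Pref X → ℝ) :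
    wsum P δ = δ τ := by
  unfold wsum
  rw [Finset.sum_eq_single τ]
  · rw [if_pos ((h τ).2 rfl)]
  · intro b _ hb
    exact if_neg (fun hP => hb ((h b).1 hP))
  · intro habs
    exact absurd (Finset.mem_univ τ) habs

lemma wsum_finsum {ι : Type*} (s : Finset ι) (P : Pref X → Prop) (f : ι → Pref X → ℝ) :
    wsum P (∑ i ∈ s, f i) = ∑ i ∈ s, wsum P (f i) := by
  unfold wsum
  rw [Finset.sum_comm]
  apply Finset.sum_congr rfl
  intro σ _
  by_cases hP : P σ
  · rw [if_pos hP, Finset.sum_apply]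
    exact Finset.sum_congr rfl fun i _ => (if_pos hP).symm
  · rw [if_neg hP]
    exact (Finset.sum_eq_zero fun i _ => if_neg hP).symm

lemma topset_congr {k : ℕ} {σ τ : Pref X}
    (h : ∀ i : Fin (Fintype.card X), (i : ℕ) < k → σ i = τ i) :
    topset k σ = topset k τ := by
  ext y
  simp only [mem_topset]
  constructor
  · intro hy
    have : τ (σ.symm y) = y := by rw [← h _ hy, Equiv.apply_symm_apply]
    rw [symm_eq this]
    exact hy
  · intro hy
    have : σ (τ.symm y) = y := by rw [h _ hy, Equiv.apply_symm_apply]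
    rw [symm_eq this]
    exact hy

lemma above_eq_topset_iff {k : ℕ} (hk : k < Fintype.card X) (σ τ : Pref X) (x : X) :
    aboveSet σ x = topset k τ ↔ (topset k σ = topset k τ ∧ σ ⟨k, hk⟩ = x) := by
  have habove : aboveSet σ x = topset ((σ.symm x : ℕ)) σ := by
    ext y
    simp only [mem_aboveSet, mem_topset, Fin.lt_def]
  constructor
  · intro h
    have hcard1 : (aboveSet σ x).card = (σ.symm x : ℕ) := by
      rw [habove]
      exact topset_card (le_of_lt (σ.symm x).isLt) σ
    have hcard2 : (aboveSet σ x).card = k := by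
      rw [h]
      exact topset_card (le_of_lt hk) τ
    have hpk : (σ.symm x : ℕ) = k := by rw [← hcard1, hcard2]
    have hx : σ ⟨k, hk⟩ = x := by
      have : σ.symm x = ⟨k, hk⟩ := Fin.ext hpk
      rw [← this, Equiv.apply_symm_apply]
    refine ⟨?_, hx⟩
    rw [← h, habove, hpk]
  · rintro ⟨hts, hx⟩
    rw [habove, symm_eq hx]
    exact hts

lemma class_total {k : ℕ} (hk : k < Fintype.card X) (δ : Pref X → ℝ) (τ : Pref X)
    (hG : ∀ x B, Gsum δ x B = 0) :
    wsum (fun σ => topset k σ = topset k τ) δ = 0 := by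
  have key : wsum (fun σ => topset k σ = topset k τ) δ
      = ∑ x : X, Gsum δ x (topset k τ) := by
    unfold Gsum wsum
    rw [Finset.sum_comm]
    apply Finset.sum_congr rfl
    intro σ _
    by_cases ht : topset k σ = topset k τ
    · rw [if_pos ht]
      rw [Finset.sum_eq_single (σ ⟨k, hk⟩)]
      · rw [if_pos ((above_eq_topset_iff hk σ τ _).2 ⟨ht, rfl⟩)]
      · intro x _ hx
        apply if_neg
        intro hEq
        exact hx ((above_eq_topset_iff hk σ τ x).1 hEq).2.symm
      · intro habs
        exact absurd (Finset.mem_univ _) habs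
    · rw [if_neg ht]
      symm
      apply Finset.sum_eq_zero
      intro x _
      apply if_neg
      intro hEq
      exact ht ((above_eq_topset_iff hk σ τ x).1 hEq).1
  rw [key]
  exact Finset.sum_eq_zero fun x _ => hG x _

def Sk (k : ℕ) (δ : Pref X → ℝ) (τ : Pref X) : ℝ :=
  wsum (fun σ => ∀ i : Fin (Fintype.card X), (i : ℕ) < k → σ i = τ i) δ

def S' (k : ℕ) (hk : k < Fintype.card X) (δ : Pref X → ℝ) (τ : Pref X) (x : X) : ℝ :=
  wsum (fun σ => (∀ i : Fin (Fintype.card X), (i : ℕ) < k → σ i = τ i) ∧ σ ⟨k, hk⟩ = x) δ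

lemma Sk_succ {k : ℕ} (hk : k < Fintype.card X) (δ : Pref X → ℝ) (τ : Pref X) :
    Sk (k+1) δ τ = S' k hk δ τ (τ ⟨k, hk⟩) := by
  apply wsum_congr
  intro σ
  constructor
  · intro h
    exact ⟨fun i hi => h i (Nat.lt_succ_of_lt hi), h ⟨k, hk⟩ (Nat.lt_succ_self k)⟩
  · rintro ⟨h1, h2⟩ i hi
    rcases Nat.lt_succ_iff_lt_or_eq.1 hi with hik | hik
    · exact h1 i hik
    · have : i = ⟨k, hk⟩ := Fin.ext hik
      rw [this]
      exact h2

lemma Sk_card (δ : Pref X → ℝ) (τ : Pref X) : Sk (Fintype.card X) δ τ = δ τ := by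
  apply wsum_unique
  intro σ
  constructor
  · intro h
    exact Equiv.ext fun i => h i i.isLt
  · rintro rfl
    intro i _
    rfl

lemma Sk_zero (δ : Pref X → ℝ) (τ : Pref X) : Sk 0 δ τ = ∑ σ : Pref X, δ σ := by
  unfold Sk wsum
  apply Finset.sum_congr rfl
  intro σ _
  rw [if_pos]
  intro i hi
  exact absurd hi (Nat.not_lt_zero _)

lemma conj_bij (k : ℕ) (σ τ : Pref X) (h : topset k σ = topset k τ) :
    Function.Bijective (fun i : Fin (Fintype.card X) => if (i : ℕ) < k then σ i else τ i) := by
  rw [Fintype.bijective_iff_injective_and_card]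
  refine ⟨?_, by simp⟩
  intro i j hij
  simp only at hij
  by_cases hi : (i : ℕ) < k <;> by_cases hj : (j : ℕ) < k
  · rw [if_pos hi, if_pos hj] at hij
    exact σ.injective hij
  · rw [if_pos hi, if_neg hj] at hij
    exfalso
    have h1 : σ i ∈ topset k σ := mem_topset.2 (by rw [symm_eq rfl]; exact hi)
    have h2 : σ i ∉ topset k τ := by
      rw [hij, mem_topset, symm_eq rfl]
      exact hj
    exact h2 (h ▸ h1)
  · rw [if_neg hi, if_pos hj] at hij
    exfalso
    have h1 : τ i ∉ topset k τ := by
      rw [mem_topset, symm_eq rfl]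
      exact hi
    have h2 : τ i ∈ topset k σ := by
      rw [hij, mem_topset, symm_eq rfl]
      exact hj
    exact h1 (h ▸ h2)
  · rw [if_neg hi, if_neg hj] at hij
    exact τ.injective hij

def conjE (k : ℕ) (σ τ : Pref X) (h : topset k σ = topset k τ) : Pref X :=
  Equiv.ofBijective _ (conj_bij k σ τ h)

lemma conjE_apply (k : ℕ) (σ τ : Pref X) (h : topset k σ = topset k τ)
    (i : Fin (Fintype.card X)) :
    conjE k σ τ h i = if (i : ℕ) < k then σ i else τ i := rfl

lemma step {k : ℕ} (hk : k < Fintype.card X) (δ : Pref X → ℝ)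
    (hG : ∀ x B, Gsum δ x B = 0) (hS : ∀ τ, Sk k δ τ = 0) :
    ∃ r ∈ RyserSpace X, ∀ τ, Sk (k+1) (δ - r) τ = 0 := by
  classical
  set rep : Finset X → Pref X := fun T =>
    if hT : ∃ τ : Pref X, topset k τ = T then hT.choose else (Fintype.equivFin X).symm with hrep
  set ρ : Pref X → Pref X := fun σ => rep (topset k σ) with hρdef
  have hρ1 : ∀ σ, topset k (ρ σ) = topset k σ := by
    intro σ
    have hT : ∃ τ : Pref X, topset k τ = topset k σ := ⟨σ, rfl⟩
    show topset k (rep (topset k σ)) = topset k σ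
    rw [hrep]
    simp only [dif_pos hT]
    exact hT.choose_spec
  have hρ2 : ∀ σ τ, topset k σ = topset k τ → ρ σ = ρ τ := by
    intro σ τ h
    show rep (topset k σ) = rep (topset k τ)
    rw [h]
  set w : Pref X → (Pref X → ℝ) := fun σ =>
    ind σ + ind (ρ σ) - ind (conjE k σ (ρ σ) (hρ1 σ).symm) - ind (conjE k (ρ σ) σ (hρ1 σ)) with hw
  have hwmem : ∀ σ, w σ ∈ RyserSpace X := by
    intro σ
    have hC : Compatible k σ (ρ σ) := by
      intro y
      rw [← mem_topset, ← mem_topset, hρ1 σ]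
    have hswap : (ind (conjE k σ (ρ σ) (hρ1 σ).symm) + ind (conjE k (ρ σ) σ (hρ1 σ))
        - ind σ - ind (ρ σ)) ∈ RyserSwaps X :=
      ⟨k, le_of_lt hk, σ, ρ σ, conjE k σ (ρ σ) (hρ1 σ).symm, conjE k (ρ σ) σ (hρ1 σ), hC,
        ⟨fun i => conjE_apply k σ (ρ σ) (hρ1 σ).symm i,
         fun i => conjE_apply k (ρ σ) σ (hρ1 σ) i⟩, rfl⟩
    have hneg : w σ = -(ind (conjE k σ (ρ σ) (hρ1 σ).symm) + ind (conjE k (ρ σ) σ (hρ1 σ))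
        - ind σ - ind (ρ σ)) := by
      rw [hw]
      abel
    rw [hneg]
    exact Submodule.neg_mem _ (Submodule.subset_span hswap)
  set r : Pref X → ℝ := ∑ σ : Pref X, δ σ • w σ with hr
  have hrmem : r ∈ RyserSpace X :=
    Submodule.sum_mem _ fun σ _ => Submodule.smul_mem _ _ (hwmem σ)
  refine ⟨r, hrmem, ?_⟩
  intro τ
  rw [Sk_succ hk]
  set x := τ ⟨k, hk⟩ with hx
  set P : Pref X → Prop :=
    fun σ => (∀ i : Fin (Fintype.card X), (i : ℕ) < k → σ i = τ i) ∧ σ ⟨k, hk⟩ = x with hP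
  show wsum P (δ - r) = 0
  rw [wsum_sub]
  have hconj_lt : ∀ (σ₁ σ₂ : Pref X) (h : topset k σ₁ = topset k σ₂)
      (i : Fin (Fintype.card X)), (i : ℕ) < k → conjE k σ₁ σ₂ h i = σ₁ i := by
    intro σ₁ σ₂ h i hi
    rw [conjE_apply, if_pos hi]
  have hconj_k : ∀ (σ₁ σ₂ : Pref X) (h : topset k σ₁ = topset k σ₂),
      conjE k σ₁ σ₂ h ⟨k, hk⟩ = σ₂ ⟨k, hk⟩ := by
    intro σ₁ σ₂ h
    rw [conjE_apply]
    exact if_neg (lt_irrefl k)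
  -- compute wsum P r
  have hfin : wsum P r = ∑ σ : Pref X, δ σ * wsum P (w σ) := by
    rw [hr, wsum_finsum]
    exact Finset.sum_congr rfl fun σ _ => wsum_smul P (δ σ) (w σ)
  have hwP : ∀ σ, wsum P (w σ) =
      bool01 (P σ) + bool01 (P (ρ σ))
      - bool01 (P (conjE k σ (ρ σ) (hρ1 σ).symm))
      - bool01 (P (conjE k (ρ σ) σ (hρ1 σ))) := by
    intro σ
    rw [hw]
    rw [wsum_sub, wsum_sub, wsum_add, wsum_ind', wsum_ind', wsum_ind', wsum_ind']
  have hmul : ∀ (Q : Pref X → Prop),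
      (∑ σ : Pref X, δ σ * bool01 (Q σ)) = wsum Q δ := by
    intro Q
    unfold wsum bool01
    apply Finset.sum_congr rfl
    intro σ _
    by_cases h : Q σ
    · rw [if_pos h, if_pos h, mul_one]
    · rw [if_neg h, if_neg h, mul_zero]
  have hsplit : wsum P r = wsum P δ
      + wsum (fun σ => P (ρ σ)) δ
      - wsum (fun σ => P (conjE k σ (ρ σ) (hρ1 σ).symm)) δ
      - wsum (fun σ => P (conjE k (ρ σ) σ (hρ1 σ))) δ := by
    rw [hfin]
    have e1 : ∀ σ : Pref X, δ σ * wsum P (w σ) =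
        (δ σ * bool01 (P σ)) + (δ σ * bool01 (P (ρ σ)))
        - (δ σ * bool01 (P (conjE k σ (ρ σ) (hρ1 σ).symm)))
        - (δ σ * bool01 (P (conjE k (ρ σ) σ (hρ1 σ)))) := by
      intro σ
      rw [hwP σ]
      ring
    rw [Finset.sum_congr rfl fun σ _ => e1 σ]
    rw [Finset.sum_sub_distrib, Finset.sum_sub_distrib, Finset.sum_add_distrib]
    rw [hmul P, hmul (fun σ => P (ρ σ)),
        hmul (fun σ => P (conjE k σ (ρ σ) (hρ1 σ).symm)),
        hmul (fun σ => P (conjE k (ρ σ) σ (hρ1 σ)))]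
  -- Term 3 vanishes
  have hT3 : wsum (fun σ => P (conjE k σ (ρ σ) (hρ1 σ).symm)) δ = 0 := by
    by_cases hc : ρ τ ⟨k, hk⟩ = x
    · have : wsum (fun σ => P (conjE k σ (ρ σ) (hρ1 σ).symm)) δ = Sk k δ τ := by
        apply wsum_congr
        intro σ
        rw [hP]
        constructor
        · rintro ⟨h1, _⟩ i hi
          rw [← hconj_lt σ (ρ σ) (hρ1 σ).symm i hi]
          exact h1 i hi
        · intro h1
          refine ⟨fun i hi => by rw [hconj_lt σ (ρ σ) (hρ1 σ).symm i hi]; exact h1 i hi, ?_⟩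
          rw [hconj_k, hρ2 σ τ (topset_congr h1)]
          exact hc
      rw [this]
      exact hS τ
    · have : wsum (fun σ => P (conjE k σ (ρ σ) (hρ1 σ).symm)) δ = wsum (fun _ => False) δ := by
        apply wsum_congr
        intro σ
        rw [hP]
        simp only [iff_false]
        rintro ⟨h1, h2⟩
        apply hc
        have hpre : ∀ i : Fin (Fintype.card X), (i : ℕ) < k → σ i = τ i := by
          intro i hi
          rw [← hconj_lt σ (ρ σ) (hρ1 σ).symm i hi]
          exact h1 i hi
        rw [← hρ2 σ τ (topset_congr hpre), ← hconj_k σ (ρ σ) (hρ1 σ).symm]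
        exact h2
      rw [this, wsum_false]
  -- Term 4 vanishes
  have hT4 : wsum (fun σ => P (conjE k (ρ σ) σ (hρ1 σ))) δ = 0 := by
    by_cases hc : ∀ i : Fin (Fintype.card X), (i : ℕ) < k → ρ τ i = τ i
    · have : wsum (fun σ => P (conjE k (ρ σ) σ (hρ1 σ))) δ
          = wsum (fun σ => aboveSet σ x = topset k τ) δ := by
        apply wsum_congr
        intro σ
        rw [hP, above_eq_topset_iff hk]
        constructor
        · rintro ⟨h1, h2⟩
          have hpre : ∀ i : Fin (Fintype.card X), (i : ℕ) < k → ρ σ i = τ i := by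
            intro i hi
            rw [← hconj_lt (ρ σ) σ (hρ1 σ) i hi]
            exact h1 i hi
          refine ⟨(hρ1 σ).symm.trans (topset_congr hpre), ?_⟩
          rw [← hconj_k (ρ σ) σ (hρ1 σ)]
          exact h2
        · rintro ⟨hts, hxx⟩
          have hρστ : ρ σ = ρ τ := hρ2 σ τ hts
          constructor
          · intro i hi
            rw [hconj_lt (ρ σ) σ (hρ1 σ) i hi, hρστ]
            exact hc i hi
          · rw [hconj_k (ρ σ) σ (hρ1 σ)]
            exact hxx
      rw [this]
      exact hG x (topset k τ)
    · have : wsum (fun σ => P (conjE k (ρ σ) σ (hρ1 σ))) δ = wsum (fun _ => False) δ := by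
        apply wsum_congr
        intro σ
        rw [hP]
        simp only [iff_false]
        rintro ⟨h1, _⟩
        apply hc
        have hpre : ∀ i : Fin (Fintype.card X), (i : ℕ) < k → ρ σ i = τ i := by
          intro i hi
          rw [← hconj_lt (ρ σ) σ (hρ1 σ) i hi]
          exact h1 i hi
        have hts : topset k σ = topset k τ := (hρ1 σ).symm.trans (topset_congr hpre)
        intro i hi
        rw [← hρ2 σ τ hts]
        exact hpre i hi
      rw [this, wsum_false]
  -- Term 2 vanishes
  have hT2 : wsum (fun σ => P (ρ σ)) δ = 0 := by
    by_cases hc : (∀ i : Fin (Fintype.card X), (i : ℕ) < k → ρ τ i = τ i) ∧ ρ τ ⟨k, hk⟩ = x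
    · have : wsum (fun σ => P (ρ σ)) δ = wsum (fun σ => topset k σ = topset k τ) δ := by
        apply wsum_congr
        intro σ
        rw [hP]
        constructor
        · rintro ⟨h1, _⟩
          exact (hρ1 σ).symm.trans (topset_congr h1)
        · intro hts
          have hρστ : ρ σ = ρ τ := hρ2 σ τ hts
          rw [hρστ]
          exact hc
      rw [this]
      exact class_total hk δ τ hG
    · have : wsum (fun σ => P (ρ σ)) δ = wsum (fun _ => False) δ := by
        apply wsum_congr
        intro σ
        rw [hP]
        simp only [iff_false]
        rintro ⟨h1, h2⟩
        apply hc
        have hts : topset k σ = topset k τ := (hρ1 σ).symm.trans (topset_congr h1)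
        rw [← hρ2 σ τ hts]
        exact ⟨h1, h2⟩
      rw [this, wsum_false]
  rw [hsplit, hT2, hT3, hT4]
  ring

lemma main_aux : ∀ m k : ℕ, k + m = Fintype.card X → ∀ δ : Pref X → ℝ,
    (∀ x B, Gsum δ x B = 0) → (∀ τ, Sk k δ τ = 0) → δ ∈ RyserSpace X := by
  intro m
  induction m with
  | zero =>
    intro k hkm δ hG hS
    have hk : k = Fintype.card X := by omega
    subst hk
    have hδ : δ = 0 := funext fun τ => (Sk_card δ τ).symm.trans (hS τ)
    rw [hδ]
    exact Submodule.zero_mem _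
  | succ m ih =>
    intro k hkm δ hG hS
    have hk : k < Fintype.card X := by omega
    obtain ⟨r, hr, hS'⟩ := step hk δ hG hS
    have hG' : ∀ x B, Gsum (δ - r) x B = 0 := by
      intro x B
      have : Gsum (δ - r) x B = Gsum δ x B - Gsum r x B := wsum_sub _ _ _
      rw [this, hG x B, gsum_ryser hr x B, sub_zero]
    have hmem := ih (k+1) (by omega) (δ - r) hG' hS'
    have hδ : δ = (δ - r) + r := by abel
    rw [hδ]
    exact Submodule.add_mem _ hmem hr

lemma choiceProb_sub (μ μ' : Pref X → ℝ) (A : Finset X) (x : X) :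
    choiceProb (μ - μ') A x = choiceProb μ A x - choiceProb μ' A x := by
  rw [choiceProb_eq_wsum, choiceProb_eq_wsum, choiceProb_eq_wsum]
  exact wsum_sub _ _ _

end

theorem statement1 :
    (∀ μ μ' : Pref X → ℝ, IsDist μ → IsDist μ' →
      (ObsEquiv μ μ' ↔ μ - μ' ∈ RyserSpace X)) ∧
    (∀ M : Set (Pref X → ℝ), (∀ μ ∈ M, IsDist μ) → ∀ μ ∈ M,
      {ν | ν ∈ M ∧ ObsEquiv μ ν} = {ν | (∃ r ∈ RyserSpace X, ν = μ + r) ∧ ν ∈ M}) := by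
  have part1 : ∀ μ μ' : Pref X → ℝ, IsDist μ → IsDist μ' →
      (ObsEquiv μ μ' ↔ μ - μ' ∈ RyserSpace X) := by
    intro μ μ' hμ hμ'
    constructor
    · intro hObs
      have hO : ∀ A : Finset X, A.Nonempty → ∀ x ∈ A, choiceProb (μ - μ') A x = 0 := by
        intro A hA x hx
        rw [choiceProb_sub, hObs A hA x hx, sub_self]
      have hG := gsum_of_obs hO
      have hS : ∀ τ : Pref X, Sk 0 (μ - μ') τ = 0 := by
        intro τ
        rw [Sk_zero]
        have : ∑ σ : Pref X, (μ - μ') σ = (∑ σ : Pref X, μ σ) - ∑ σ : Pref X, μ' σ := by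
          rw [← Finset.sum_sub_distrib]
          exact Finset.sum_congr rfl fun σ _ => rfl
        rw [this, hμ.2, hμ'.2, sub_self]
      exact main_aux (Fintype.card X) 0 (by omega) (μ - μ') hG hS
    · intro hmem A hA x hx
      have h0 : choiceProb (μ - μ') A x = 0 := by
        rw [choice_decomp _ A x hx]
        exact Finset.sum_eq_zero fun B _ => gsum_ryser hmem x B
      rw [choiceProb_sub] at h0
      linarith
  refine ⟨part1, ?_⟩
  intro M hM μ hμ
  ext ν
  simp only [Set.mem_setOf_eq]
  constructor
  · rintro ⟨hν, hOE⟩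
    have h1 : μ - ν ∈ RyserSpace X := (part1 μ ν (hM μ hμ) (hM ν hν)).1 hOE
    refine ⟨⟨-(μ - ν), Submodule.neg_mem _ h1, ?_⟩, hν⟩
    abel
  · rintro ⟨⟨r, hr, rfl⟩, hν⟩
    refine ⟨hν, ?_⟩
    apply (part1 μ (μ + r) (hM μ hμ) (hM _ hν)).2
    have : μ - (μ + r) = -r := by abel
    rw [this]
    exact Submodule.neg_mem _ hr

end Stmt1
end

section
/- Let ⊵ be a linear order on the finite set X. (a) Every single-crossing random utility representation (with respect to ⊵) is swap-progressive (with respect to ⊵). (b) A swap-progressive representation is single-crossing if and only if it is progressive. -/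
open scoped Classical

namespace Stmt5

variable {X : Type*} [Fintype X] [DecidableEq X]

/-- A preference on the finite set `X`, encoded by its ranking: position `0` is the most
preferred alternative, and so on. -/
abbrev Pref (X : Type*) [Fintype X] := Fin (Fintype.card X) ≃ X

/-- `x` is strictly `σ`-preferred to `y`. -/
def PrefLT (σ : Pref X) (x y : X) : Prop := σ.symm x < σ.symm y

/-- `x` is the `σ`-maximal element of the menu `A`. -/
def IsMaxIn (σ : Pref X) (A : Finset X) (x : X) : Prop :=
  x ∈ A ∧ ∀ y ∈ A, σ.symm x ≤ σ.symm y

/-- `μ` is a probability distribution over preferences. -/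
def IsDist (μ : Pref X → ℝ) : Prop :=
  (∀ σ, 0 ≤ μ σ) ∧ ∑ σ : Pref X, μ σ = 1

/-- Two preferences are `k`-compatible if they have the same set of `k` best alternatives. -/
def Compatible (k : ℕ) (σ₁ σ₂ : Pref X) : Prop :=
  ∀ x : X, ((σ₁.symm x : ℕ) < k ↔ (σ₂.symm x : ℕ) < k)

/-- `μ` is swap-progressive with respect to `tri` (`tri x y` means `x ⊵ y`). -/
def SwapProgressive (tri : X → X → Prop) (μ : Pref X → ℝ) : Prop :=
  ∃ (K : ℕ) (e : Fin K → Pref X), Function.Injective e ∧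
    Set.range e = {σ | μ σ ≠ 0} ∧
    ∀ i j : Fin K, j < i → ∀ (k : ℕ) (hk : k < Fintype.card X),
      Compatible k (e i) (e j) → tri (e i ⟨k, hk⟩) (e j ⟨k, hk⟩)

/-- `μ` is a single-crossing representation with respect to `tri`: its support can be
enumerated `≻_1, …, ≻_K` so that if `x ⊵ y` and `x ≻_j y` then `x ≻_i y` for all `i > j`. -/
def SingleCrossing (tri : X → X → Prop) (μ : Pref X → ℝ) : Prop :=
  ∃ (K : ℕ) (e : Fin K → Pref X), Function.Injective e ∧
    Set.range e = {σ | μ σ ≠ 0} ∧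
    ∀ x y : X, tri x y → ∀ j i : Fin K, j < i → PrefLT (e j) x y → PrefLT (e i) x y

/-- `μ` is progressive with respect to `tri`: its support can be enumerated so that for
each nonempty menu, later preferences in the enumeration choose `⊵`-higher alternatives. -/
def Progressive (tri : X → X → Prop) (μ : Pref X → ℝ) : Prop :=
  ∃ (K : ℕ) (e : Fin K → Pref X), Function.Injective e ∧
    Set.range e = {σ | μ σ ≠ 0} ∧
    ∀ i j : Fin K, j < i → ∀ A : Finset X, A.Nonempty →
      ∀ x y : X, IsMaxIn (e i) A x → IsMaxIn (e j) A y → tri x y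

theorem statement5 (tri : X → X → Prop) (htri : IsLinearOrder X tri) :
    (∀ μ : Pref X → ℝ, IsDist μ → SingleCrossing tri μ → SwapProgressive tri μ) ∧
    (∀ μ : Pref X → ℝ, IsDist μ → SwapProgressive tri μ →
      (SingleCrossing tri μ ↔ Progressive tri μ)) := by
  haveI := htri
  constructor
  · rintro μ hμ ⟨K, e, he, hrange, hSC⟩
    refine ⟨K, e, he, hrange, ?_⟩
    intro i j hji k hk hcomp
    set x := e i ⟨k, hk⟩ with hx
    set y := e j ⟨k, hk⟩ with hy
    by_cases hxy : x = y
    · rw [hxy]; exact refl_of tri y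
    · have hix : (e i).symm x = ⟨k, hk⟩ := (e i).symm_apply_apply _
      have hjy : (e j).symm y = ⟨k, hk⟩ := (e j).symm_apply_apply _
      have h1 : ¬ ((e i).symm x : ℕ) < k := by rw [hix]; simp
      have h2 : ¬ ((e j).symm x : ℕ) < k := fun h => h1 ((hcomp x).2 h)
      have h3 : ((e j).symm x : ℕ) ≠ k := by
        intro h
        apply hxy
        have : (e j).symm x = (e j).symm y := by rw [hjy]; exact Fin.ext h
        exact (e j).symm.injective this
      have hjyx : PrefLT (e j) y x := by
        show (e j).symm y < (e j).symm x
        rw [hjy]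
        exact Fin.lt_def.mpr (lt_of_le_of_ne (not_lt.mp h2) (Ne.symm h3))
      have h4 : ¬ ((e j).symm y : ℕ) < k := by rw [hjy]; simp
      have h5 : ¬ ((e i).symm y : ℕ) < k := fun h => h4 ((hcomp y).1 h)
      have h6 : ((e i).symm y : ℕ) ≠ k := by
        intro h
        apply hxy
        have : (e i).symm y = (e i).symm x := by rw [hix]; exact Fin.ext h
        exact ((e i).symm.injective this).symm
      have hixy : PrefLT (e i) x y := by
        show (e i).symm x < (e i).symm y
        rw [hix]
        exact Fin.lt_def.mpr (lt_of_le_of_ne (not_lt.mp h5) (Ne.symm h6))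
      rcases total_of tri x y with h | h
      · exact h
      · exact absurd (hSC y x h j i hji hjyx) (lt_asymm hixy)
  · rintro μ hμ hswap
    constructor
    · rintro ⟨K, e, he, hrange, hSC⟩
      refine ⟨K, e, he, hrange, ?_⟩
      intro i j hji A hA x y hxi hyj
      by_cases hxy : x = y
      · rw [hxy]; exact refl_of tri y
      · have hiy : PrefLT (e i) x y :=
          lt_of_le_of_ne (hxi.2 y hyj.1) (fun h => hxy ((e i).symm.injective h))
        have hjx : PrefLT (e j) y x :=
          lt_of_le_of_ne (hyj.2 x hxi.1) (fun h => hxy ((e j).symm.injective h).symm)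
        rcases total_of tri x y with h | h
        · exact h
        · exact absurd (hSC y x h j i hji hjx) (lt_asymm hiy)
    · rintro ⟨K, e, he, hrange, hP⟩
      refine ⟨K, e, he, hrange, ?_⟩
      intro x y htxy j i hji hjxy
      by_contra hixy
      have hxy : x ≠ y := fun h => absurd hjxy (by rw [h]; exact lt_irrefl _)
      have hA : ({x, y} : Finset X).Nonempty := ⟨x, by simp⟩
      have hmaxj : IsMaxIn (e j) {x, y} x := by
        refine ⟨by simp, ?_⟩
        intro z hz
        rcases Finset.mem_insert.mp hz with h | h
        · subst h; exact le_refl _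
        · have h' := Finset.mem_singleton.mp h; subst h'; exact le_of_lt hjxy
      have hmaxi : IsMaxIn (e i) {x, y} y := by
        refine ⟨by simp, ?_⟩
        intro z hz
        rcases Finset.mem_insert.mp hz with h | h
        · subst h; exact not_lt.mp hixy
        · have h' := Finset.mem_singleton.mp h; subst h'; exact le_refl _
      have := hP i j hji {x, y} hA y x hmaxi hmaxj
      exact hxy (antisymm htxy this)

end Stmt5
end

section
/- Fix a finite set X and a collection of menus Σ ⊆ 2^X∖{∅}. Two distributions μ, μ' ∈ Δ(C_Σ) over choice functions generate identical choice probabilities on every menu in Σ if and only if μ − μ' lies in the Ryser subspace ℛ^{rc}. In particular, for any M ⊆ Δ(C_Σ) and μ ∈ M, the set of distributions in M generating the same choice probabilities as μ on every menu in Σ is exactly (μ + ℛ^{rc}) ∩ M. -/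
/-!
Swaps preserve every menu marginal, which gives one inclusion. Conversely, fix a choice
function `c₀` and work modulo the Ryser subspace. Replacing the choices of `c` by those of `c₀`
one menu at a time, each step being a swap with `c₀`, shows that the point mass at `c` is
congruent to `∑_A δ(c₀[A ↦ c A]) - (|Σ| - 1) δ(c₀)`. Integrating this against a signed measure
`f`, the first term depends only on the menu marginals of `f` and the second only on its total
mass, and both vanish for `f = μ - μ'`.
-/

open scoped Classical

namespace Stmt7

variable {X : Type*} [Fintype X] [DecidableEq X]

/-- A choice function on the collection of menus `Men`: for each menu `A ∈ Men` it
selects an element of `A`. -/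
abbrev ChoiceFun (Men : Finset (Finset X)) :=
  {c : Men → X // ∀ A : Men, c A ∈ (A : Finset X)}

variable (Men : Finset (Finset X))

/-- `μ` is a probability distribution over choice functions. -/
def IsDist (μ : ChoiceFun Men → ℝ) : Prop :=
  (∀ c, 0 ≤ μ c) ∧ ∑ c : ChoiceFun Men, μ c = 1

/-- The probability that `a` is chosen from the menu `A ∈ Men` under `μ`. -/
noncomputable def choiceProb (μ : ChoiceFun Men → ℝ) (A : Men) (a : X) : ℝ :=
  ∑ c : ChoiceFun Men, if c.1 A = a then μ c else 0

/-- Two measures over choice functions generate identical choice probabilities on every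
menu in `Men`. -/
def SameRC (μ ν : ChoiceFun Men → ℝ) : Prop :=
  ∀ (A : Men) (a : X), choiceProb Men μ A a = choiceProb Men ν A a

/-- The indicator (point mass) vector of a choice function. -/
noncomputable def ind (c₀ : ChoiceFun Men) : ChoiceFun Men → ℝ :=
  fun c => if c = c₀ then 1 else 0

/-- A Ryser swap for the random choice model: `c₁', c₂'` are obtained from `c₁, c₂` by
exchanging their choices on a single menu `A₀ ∈ Men`. -/
def IsRyserSwapRC (R : ChoiceFun Men → ℝ) : Prop :=
  ∃ (c₁ c₂ c₁' c₂' : ChoiceFun Men) (A₀ : Men),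
    c₁'.1 A₀ = c₂.1 A₀ ∧ c₂'.1 A₀ = c₁.1 A₀ ∧
    (∀ B : Men, B ≠ A₀ → c₁'.1 B = c₁.1 B ∧ c₂'.1 B = c₂.1 B) ∧
    R = ind Men c₁' + ind Men c₂' - ind Men c₁ - ind Men c₂

/-- The Ryser subspace for the random choice model. -/
noncomputable def RyserSpaceRC : Submodule ℝ (ChoiceFun Men → ℝ) :=
  Submodule.span ℝ {R | IsRyserSwapRC Men R}

end Stmt7

namespace Stmt7

variable {X : Type*} [DecidableEq X] {Men : Finset (Finset X)}

noncomputable def ChoiceFun.update (c : ChoiceFun Men) (A : Men) (a : X)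
    (ha : a ∈ (A : Finset X)) : ChoiceFun Men :=
  ⟨Function.update c.1 A a, fun B => by
    rcases eq_or_ne B A with rfl | hB
    · simpa using ha
    · simpa [Function.update_of_ne hB] using c.2 B⟩

@[simp]
lemma ChoiceFun.update_apply_self (c : ChoiceFun Men) (A : Men) (a : X)
    (ha : a ∈ (A : Finset X)) : (c.update A a ha).1 A = a :=
  Function.update_self _ _ _

lemma ChoiceFun.update_apply_of_ne (c : ChoiceFun Men) {A B : Men} (a : X)
    (ha : a ∈ (A : Finset X)) (hB : B ≠ A) : (c.update A a ha).1 B = c.1 B :=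
  Function.update_of_ne hB _ _

noncomputable def ryserClass (c : ChoiceFun Men) : (ChoiceFun Men → ℝ) ⧸ RyserSpaceRC Men :=
  Submodule.Quotient.mk (ind Men c)

lemma ryserClass_update_add_update (c d : ChoiceFun Men) (A : Men) :
    ryserClass (c.update A (d.1 A) (d.2 A)) + ryserClass (d.update A (c.1 A) (c.2 A)) =
      ryserClass c + ryserClass d := by
  have hswap : IsRyserSwapRC Men (ind Men (c.update A (d.1 A) (d.2 A)) +
      ind Men (d.update A (c.1 A) (c.2 A)) - ind Men c - ind Men d) :=
    ⟨c, d, _, _, A, c.update_apply_self A _ _, d.update_apply_self A _ _,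
      fun _ hB => ⟨c.update_apply_of_ne _ _ hB, d.update_apply_of_ne _ _ hB⟩, rfl⟩
  have h := (Submodule.Quotient.mk_eq_zero (RyserSpaceRC Men)).2 (Submodule.subset_span hswap)
  rw [Submodule.Quotient.mk_sub, Submodule.Quotient.mk_sub, Submodule.Quotient.mk_add, sub_sub,
    sub_eq_zero] at h
  exact h

lemma ryserClass_add_card_nsmul (c₀ : ChoiceFun Men) (S : Finset Men) (c : ChoiceFun Men)
    (hc : ∀ A ∉ S, c.1 A = c₀.1 A) :
    ryserClass c + S.card • ryserClass c₀ =
      ∑ A ∈ S, ryserClass (c₀.update A (c.1 A) (c.2 A)) + ryserClass c₀ := by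
  induction S using Finset.induction_on generalizing c with
  | empty =>
    obtain rfl : c = c₀ := Subtype.ext (funext fun A => hc A (Finset.notMem_empty A))
    simp
  | insert A S hA ih =>
    set c' := c.update A (c₀.1 A) (c₀.2 A)
    have hc' : ∀ B ∉ S, c'.1 B = c₀.1 B := by
      intro B hB
      rcases eq_or_ne B A with rfl | hBA
      · exact c.update_apply_self B _ _
      · rw [c.update_apply_of_ne _ _ hBA]
        exact hc B (by simp [hBA, hB])
    have hS : ∀ B ∈ S, c₀.update B (c'.1 B) (c'.2 B) = c₀.update B (c.1 B) (c.2 B) :=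
      fun B hB => by
        simp only [c', c.update_apply_of_ne _ _ (ne_of_mem_of_not_mem hB hA)]
    have ih' := ih c' hc'
    rw [Finset.sum_congr rfl fun B hB => congrArg ryserClass (hS B hB)] at ih'
    have hswap := ryserClass_update_add_update c c₀ A
    rw [Finset.card_insert_of_notMem hA, Finset.sum_insert hA, succ_nsmul]
    linear_combination (norm := abel) ih' - hswap

variable [Fintype X]

lemma choiceProb_eq_sum_filter (μ : ChoiceFun Men → ℝ) (A : Men) (a : X) :
    choiceProb Men μ A a = ∑ c with c.1 A = a, μ c :=
  (Finset.sum_filter _ _).symm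

noncomputable def choiceProbLinear (A : Men) (a : X) : (ChoiceFun Men → ℝ) →ₗ[ℝ] ℝ where
  toFun μ := choiceProb Men μ A a
  map_add' μ ν := by simp only [choiceProb_eq_sum_filter, Pi.add_apply, Finset.sum_add_distrib]
  map_smul' r μ := by
    simp only [choiceProb_eq_sum_filter, Pi.smul_apply, smul_eq_mul, RingHom.id_apply,
      Finset.mul_sum]

@[simp]
lemma choiceProbLinear_apply (A : Men) (a : X) (μ : ChoiceFun Men → ℝ) :
    choiceProbLinear A a μ = choiceProb Men μ A a :=
  rfl

lemma choiceProb_sub (μ ν : ChoiceFun Men → ℝ) (A : Men) (a : X) :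
    choiceProb Men (μ - ν) A a = choiceProb Men μ A a - choiceProb Men ν A a :=
  (choiceProbLinear A a).map_sub μ ν

lemma choiceProb_ind (c₀ : ChoiceFun Men) (A : Men) (a : X) :
    choiceProb Men (ind Men c₀) A a = if c₀.1 A = a then 1 else 0 := by
  simp [choiceProb_eq_sum_filter, ind]

lemma choiceProb_eq_zero_of_isRyserSwapRC {R : ChoiceFun Men → ℝ} (hR : IsRyserSwapRC Men R)
    (A : Men) (a : X) : choiceProb Men R A a = 0 := by
  obtain ⟨c₁, c₂, c₁', c₂', A₀, h₁, h₂, hne, rfl⟩ := hR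
  change choiceProbLinear A a _ = 0
  simp only [map_add, map_sub, choiceProbLinear_apply, choiceProb_ind]
  rcases eq_or_ne A A₀ with rfl | hA
  · rw [h₁, h₂]; ring
  · rw [(hne A hA).1, (hne A hA).2]; ring

lemma ryserSpaceRC_le_ker_choiceProbLinear (A : Men) (a : X) :
    RyserSpaceRC Men ≤ LinearMap.ker (choiceProbLinear A a) :=
  Submodule.span_le.2 fun _ hR => choiceProb_eq_zero_of_isRyserSwapRC hR A a

lemma sum_smul_comp_eq_sum_choiceProb_smul {M : Type*} [AddCommMonoid M] [Module ℝ M]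
    (f : ChoiceFun Men → ℝ) (A : Men) (g : X → M) :
    ∑ c, f c • g (c.1 A) = ∑ a, choiceProb Men f A a • g a := by
  rw [← Finset.sum_fiberwise Finset.univ (fun c : ChoiceFun Men => c.1 A)]
  refine Finset.sum_congr rfl fun a _ => ?_
  rw [choiceProb_eq_sum_filter, Finset.sum_smul]
  exact Finset.sum_congr rfl fun c hc => by rw [(Finset.mem_filter.1 hc).2]

lemma eq_sum_smul_ind (f : ChoiceFun Men → ℝ) : f = ∑ c, f c • ind Men c := by
  ext c
  simp [ind]

theorem mem_ryserSpaceRC_of_choiceProb_eq_zero {f : ChoiceFun Men → ℝ}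
    (hf : ∀ A a, choiceProb Men f A a = 0) (hsum : ∑ c, f c = 0) : f ∈ RyserSpaceRC Men := by
  rcases isEmpty_or_nonempty (ChoiceFun Men) with _ | ⟨⟨c₀⟩⟩
  · exact Subsingleton.elim (0 : ChoiceFun Men → ℝ) f ▸ zero_mem _
  let g : Men → X → (ChoiceFun Men → ℝ) ⧸ RyserSpaceRC Men := fun A a =>
    if ha : a ∈ (A : Finset X) then ryserClass (c₀.update A a ha) else 0
  have hclass : ∀ c : ChoiceFun Men, ryserClass c =
      ∑ A, g A (c.1 A) + (ryserClass c₀ - Fintype.card Men • ryserClass c₀) := by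
    intro c
    have h := ryserClass_add_card_nsmul c₀ Finset.univ c (by simp)
    simp only [g, dif_pos (c.2 _), Finset.card_univ] at h ⊢
    linear_combination (norm := abel) h
  rw [← Submodule.Quotient.mk_eq_zero, eq_sum_smul_ind f]
  calc Submodule.Quotient.mk (∑ c, f c • ind Men c)
      = ∑ c, f c • ryserClass c := by
        simp only [← Submodule.mkQ_apply, map_sum, map_smul]
        rfl
    _ = ∑ A, ∑ c, f c • g A (c.1 A) +
          (∑ c, f c) • (ryserClass c₀ - Fintype.card Men • ryserClass c₀) := by
      rw [Finset.sum_congr rfl fun c _ => congrArg (f c • ·) (hclass c)]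
      simp only [smul_add, Finset.smul_sum, Finset.sum_add_distrib, Finset.sum_smul]
      rw [Finset.sum_comm]
    _ = 0 := by simp [sum_smul_comp_eq_sum_choiceProb_smul, hf, hsum]

theorem sameRC_iff_sub_mem_ryserSpaceRC {μ ν : ChoiceFun Men → ℝ} (hsum : ∑ c, μ c = ∑ c, ν c) :
    SameRC Men μ ν ↔ μ - ν ∈ RyserSpaceRC Men := by
  refine ⟨fun h => mem_ryserSpaceRC_of_choiceProb_eq_zero (fun A a => ?_) ?_, fun h A a => ?_⟩
  · rw [choiceProb_sub, h A a, sub_self]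
  · simp only [Pi.sub_apply, Finset.sum_sub_distrib, hsum, sub_self]
  · have h0 := ryserSpaceRC_le_ker_choiceProbLinear A a h
    rwa [LinearMap.mem_ker, choiceProbLinear_apply, choiceProb_sub, sub_eq_zero] at h0

end Stmt7

namespace Stmt7

variable {X : Type*} [Fintype X] [DecidableEq X]

variable (Men : Finset (Finset X))

theorem statement7 :
    (∀ μ μ' : ChoiceFun Men → ℝ, IsDist Men μ → IsDist Men μ' →
      (SameRC Men μ μ' ↔ μ - μ' ∈ RyserSpaceRC Men)) ∧
    (∀ M : Set (ChoiceFun Men → ℝ), (∀ μ ∈ M, IsDist Men μ) → ∀ μ ∈ M,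
      {ν | ν ∈ M ∧ SameRC Men μ ν} =
        {ν | (∃ r ∈ RyserSpaceRC Men, ν = μ + r) ∧ ν ∈ M}) := by
  have hiff : ∀ μ μ' : ChoiceFun Men → ℝ, IsDist Men μ → IsDist Men μ' →
      (SameRC Men μ μ' ↔ μ - μ' ∈ RyserSpaceRC Men) :=
    fun μ μ' hμ hμ' => sameRC_iff_sub_mem_ryserSpaceRC (hμ.2.trans hμ'.2.symm)
  refine ⟨hiff, fun M hM μ hμ => Set.ext fun ν => ?_⟩
  constructor
  · rintro ⟨hν, hsame⟩
    have hmem := (hiff μ ν (hM μ hμ) (hM ν hν)).1 hsame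
    exact ⟨⟨ν - μ, sub_mem_comm_iff.1 hmem, (add_sub_cancel μ ν).symm⟩, hν⟩
  · rintro ⟨⟨r, hr, rfl⟩, hν⟩
    refine ⟨hν, (hiff μ (μ + r) (hM μ hμ) (hM _ hν)).2 ?_⟩
    rwa [sub_add_cancel_left, neg_mem_iff]

end Stmt7
end

section
/- Fix a finite set X and a time horizon T. Two distributions μ, μ' ∈ Δ(C^{dc}) over dynamic choice functions are observationally equivalent if and only if μ − μ' lies in the Ryser subspace ℛ^{dc}. In particular, for any M ⊆ Δ(C^{dc}) and μ ∈ M, the set of distributions in M observationally equivalent to μ is exactly (μ + ℛ^{dc}) ∩ M. -/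
open scoped Classical

namespace Stmt9

variable {X : Type*} [Fintype X] [DecidableEq X] {T : ℕ}

/-- `μ` is a probability distribution over dynamic choice functions `{1,…,T} → X`
(encoded as `Fin T → X`). -/
def IsDist (μ : (Fin T → X) → ℝ) : Prop :=
  (∀ c, 0 ≤ μ c) ∧ ∑ c : Fin T → X, μ c = 1

/-- Observational equivalence of distributions over dynamic choice functions: they
generate the same system of conditional choice probabilities, equivalently the same
first-period marginal and the same joint distribution of each consecutive pair of
choices. -/
def ObsEquivDC (μ μ' : (Fin T → X) → ℝ) : Prop :=
  (∀ (h : 0 < T) (x : X),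
    (∑ c : Fin T → X, if c ⟨0, h⟩ = x then μ c else 0) =
      (∑ c : Fin T → X, if c ⟨0, h⟩ = x then μ' c else 0)) ∧
  (∀ (i : ℕ) (h : i + 1 < T) (x y : X),
    (∑ c : Fin T → X,
        if c ⟨i, Nat.lt_of_succ_lt h⟩ = x ∧ c ⟨i + 1, h⟩ = y then μ c else 0) =
      (∑ c : Fin T → X,
        if c ⟨i, Nat.lt_of_succ_lt h⟩ = x ∧ c ⟨i + 1, h⟩ = y then μ' c else 0))

/-- The indicator (point mass) vector of a dynamic choice function. -/
noncomputable def ind (c₀ : Fin T → X) : (Fin T → X) → ℝ :=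
  fun c => if c = c₀ then 1 else 0

/-- A Ryser swap for dynamic discrete choice: `c₁', c₂'` are obtained from a
`t`-compatible pair `c₁, c₂` (making the same choice in period `t - 1`; here `m = t - 1`)
by exchanging their choices in the first `t - 1` periods. -/
def IsRyserSwapDC (R : (Fin T → X) → ℝ) : Prop :=
  ∃ (m : ℕ) (hm1 : 1 ≤ m) (hm : m < T) (c₁ c₂ c₁' c₂' : Fin T → X),
    c₁ ⟨m - 1, by omega⟩ = c₂ ⟨m - 1, by omega⟩ ∧
    (∀ j : Fin T, c₁' j = if (j : ℕ) < m then c₂ j else c₁ j) ∧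
    (∀ j : Fin T, c₂' j = if (j : ℕ) < m then c₁ j else c₂ j) ∧
    R = ind c₁' + ind c₂' - ind c₁ - ind c₂

/-- The Ryser subspace for dynamic discrete choice. -/
noncomputable def RyserSpaceDC (X : Type*) [Fintype X] [DecidableEq X] (T : ℕ) :
    Submodule ℝ ((Fin T → X) → ℝ) :=
  Submodule.span ℝ {R | IsRyserSwapDC R}

/-! Observational equivalence of `μ` and `μ'` says that `μ - μ'` lies in the common kernel of
the first-period and consecutive-pair marginal maps. A Ryser swap lies in this kernel, since the
new paths agree with the old ones crosswise before period `t - 1` and straight from `t - 1` on.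

Conversely, let `ν` on paths of length `n + 2` have vanishing marginals and fix `x : X`.
Replacing the last choice by `x` pushes `ν` to the image, under appending `x`, of its marginal on
the first `n + 1` periods, which lies in the Ryser space by induction. The difference is a
combination of the swaps exchanging the first `n + 1` periods of each path `c` with those of the
constant path at `c n`, up to pushforwards along functions of the last pair of choices, which
vanish. For `T = 0` the kernel is everything, but there is only one path. -/

set_option linter.unusedSectionVars false

section Pushforward

variable {α β γ : Type*} [Fintype α] [DecidableEq β] [DecidableEq γ]
  (R : Type*) {M : Type*} [Semiring R] [AddCommMonoid M] [Module R M]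

def pushforward (f : α → β) : (α → M) →ₗ[R] (β → M) where
  toFun ν b := ∑ a, if f a = b then ν a else 0
  map_add' ν ν' := by
    ext b
    simp only [Pi.add_apply, ← Finset.sum_add_distrib]
    exact Finset.sum_congr rfl fun a _ => by split_ifs <;> simp
  map_smul' r ν := by
    ext b
    simp only [Pi.smul_apply, RingHom.id_apply, Finset.smul_sum]
    exact Finset.sum_congr rfl fun a _ => by split_ifs <;> simp

variable {R}

theorem pushforward_apply (f : α → β) (ν : α → M) (b : β) :
    pushforward R f ν b = ∑ a, if f a = b then ν a else 0 := rfl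

variable [DecidableEq α]

@[simp]
theorem pushforward_single (f : α → β) (a : α) (m : M) :
    pushforward R f (Pi.single a m) = Pi.single (f a) m := by
  ext b
  simp only [pushforward_apply, Pi.single_apply]
  rw [Finset.sum_eq_single a (fun a' _ ha' => by simp [ha'])
    (fun h => (h (Finset.mem_univ a)).elim)]
  simp [eq_comm]

theorem pushforward_eq_sum_single (f : α → β) (ν : α → M) :
    pushforward R f ν = ∑ a, Pi.single (f a) (ν a) := by
  conv_lhs => rw [← Finset.univ_sum_single ν]
  simp only [map_sum, pushforward_single]

theorem pushforward_comp [Fintype β] (g : β → γ) (f : α → β) :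
    pushforward (M := M) R (g ∘ f) = (pushforward R g).comp (pushforward R f) :=
  LinearMap.pi_ext fun a m => by simp [Function.comp_apply]

theorem pushforward_comp_apply_eq_zero [Fintype β] (g : β → γ) {f : α → β} {ν : α → M}
    (hν : pushforward R f ν = 0) : pushforward R (g ∘ f) ν = 0 := by
  rw [pushforward_comp, LinearMap.comp_apply, hν, map_zero]

theorem eq_zero_of_pushforward_eq_zero {f : α → β} (hf : f.Injective) {ν : α → M}
    (hν : pushforward R f ν = 0) : ν = 0 := by
  ext a
  have := congrFun hν (f a)
  simpa [pushforward_apply, hf.eq_iff] using this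

theorem pushforward_swap_eq_zero {M : Type*} [AddCommGroup M] [Module R M] (f : α → β)
    {a₁ a₂ a₁' a₂' : α} (h : f a₁' = f a₂ ∧ f a₂' = f a₁ ∨ f a₁' = f a₁ ∧ f a₂' = f a₂)
    (m : M) :
    pushforward R f
      (Pi.single a₁' m + Pi.single a₂' m - Pi.single a₁ m - Pi.single a₂ m : α → M) = 0 := by
  simp only [map_add, map_sub, pushforward_single]
  rcases h with ⟨h₁, h₂⟩ | ⟨h₁, h₂⟩ <;> rw [h₁, h₂] <;> abel

end Pushforward

theorem ind_eq_single (c : Fin T → X) : ind c = Pi.single c 1 := by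
  ext c'
  simp [ind, Pi.single_apply]

theorem smul_ind (r : ℝ) (c : Fin T → X) : r • ind c = Pi.single c r := by
  rw [ind_eq_single, ← Pi.single_smul', smul_eq_mul, mul_one]

def firstChoice (h : 0 < T) (c : Fin T → X) : X := c ⟨0, h⟩

def choicePair (i : ℕ) (h : i + 1 < T) (c : Fin T → X) : X × X := (c ⟨i, by omega⟩, c ⟨i + 1, h⟩)

def marginalKer (X : Type*) [Fintype X] [DecidableEq X] (T : ℕ) :
    Submodule ℝ ((Fin T → X) → ℝ) :=
  (⨅ h : 0 < T, LinearMap.ker (pushforward ℝ (firstChoice (X := X) h))) ⊓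
    ⨅ (i : ℕ) (h : i + 1 < T), LinearMap.ker (pushforward ℝ (choicePair (X := X) i h))

theorem mem_marginalKer {ν : (Fin T → X) → ℝ} :
    ν ∈ marginalKer X T ↔ (∀ h, pushforward ℝ (firstChoice h) ν = 0) ∧
      ∀ i h, pushforward ℝ (choicePair i h) ν = 0 := by
  simp [marginalKer]

theorem obsEquivDC_iff_sub_mem_marginalKer {μ μ' : (Fin T → X) → ℝ} :
    ObsEquivDC μ μ' ↔ μ - μ' ∈ marginalKer X T := by
  simp only [ObsEquivDC, mem_marginalKer, map_sub, sub_eq_zero, funext_iff, pushforward_apply,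
    firstChoice, choicePair, Prod.forall, Prod.mk.injEq]
  exact Iff.rfl

theorem IsRyserSwapDC.mem_marginalKer {R : (Fin T → X) → ℝ} (hR : IsRyserSwapDC R) :
    R ∈ marginalKer X T := by
  obtain ⟨m, hm1, hm, c₁, c₂, c₁', c₂', hcompat, h₁, h₂, rfl⟩ := hR
  have before : ∀ j : Fin T, ↑j < m → c₁' j = c₂ j ∧ c₂' j = c₁ j := fun j hj => by
    simp [h₁, h₂, hj]
  have after : ∀ j : Fin T, m ≤ ↑j + 1 → c₁' j = c₁ j ∧ c₂' j = c₂ j := fun j hj => by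
    rcases hj.lt_or_eq with hj | hj
    · simp [h₁, h₂, show ¬ (j : ℕ) < m by omega]
    · rw [show j = ⟨m - 1, by omega⟩ from Fin.ext (by simp; omega)]
      simp [h₁, h₂, show m - 1 < m by omega, hcompat]
  simp only [ind_eq_single]
  rw [Stmt9.mem_marginalKer]
  refine ⟨fun h => pushforward_swap_eq_zero _ (.inl (before ⟨0, h⟩ hm1)) _, fun i h => ?_⟩
  refine pushforward_swap_eq_zero _ ?_ _
  simp only [choicePair, Prod.mk.injEq]
  rcases lt_or_ge (i + 1) m with hi | hi
  · have := before ⟨i, by omega⟩ (by simp; omega)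
    have := before ⟨i + 1, h⟩ hi
    tauto
  · have := after ⟨i, by omega⟩ hi
    have := after ⟨i + 1, h⟩ (by simp; omega)
    tauto

theorem ryserSpaceDC_le_marginalKer : RyserSpaceDC X T ≤ marginalKer X T :=
  Submodule.span_le.mpr fun _ hR => hR.mem_marginalKer

theorem IsRyserSwapDC.pushforward_snoc {n : ℕ} {R : (Fin n → X) → ℝ} (hR : IsRyserSwapDC R)
    (x : X) :
    IsRyserSwapDC (pushforward ℝ (fun p : Fin n → X => (Fin.snoc p x : Fin (n + 1) → X)) R) := by
  obtain ⟨m, hm1, hm, c₁, c₂, c₁', c₂', hcompat, h₁, h₂, rfl⟩ := hR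
  refine ⟨m, hm1, by omega, Fin.snoc c₁ x, Fin.snoc c₂ x, Fin.snoc c₁' x, Fin.snoc c₂' x,
    ?_, ?_, ?_, ?_⟩
  · change Fin.snoc (α := fun _ => X) c₁ x (Fin.castSucc (⟨m - 1, by omega⟩ : Fin n)) =
      Fin.snoc (α := fun _ => X) c₂ x (Fin.castSucc (⟨m - 1, by omega⟩ : Fin n))
    simpa only [Fin.snoc_castSucc] using hcompat
  · intro j
    refine Fin.lastCases ?_ (fun k => ?_) j
    · simp [show ¬ n < m by omega]
    · simp [h₁ k]
  · intro j
    refine Fin.lastCases ?_ (fun k => ?_) j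
    · simp [show ¬ n < m by omega]
    · simp [h₂ k]
  · simp [ind_eq_single]

theorem pushforward_snoc_mem_ryserSpaceDC {n : ℕ} {ν : (Fin n → X) → ℝ}
    (hν : ν ∈ RyserSpaceDC X n) (x : X) :
    pushforward ℝ (fun p : Fin n → X => (Fin.snoc p x : Fin (n + 1) → X)) ν ∈
      RyserSpaceDC X (n + 1) :=
  (Submodule.map_span_le _ _ _).mpr (fun _ hR => Submodule.subset_span (hR.pushforward_snoc x))
    (Submodule.mem_map_of_mem hν)

theorem isRyserSwapDC_snoc {n : ℕ} {p p' : Fin (n + 1) → X}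
    (h : p (Fin.last n) = p' (Fin.last n)) (y y' : X) :
    IsRyserSwapDC (T := n + 2) (ind (Fin.snoc p' y) + ind (Fin.snoc p y') - ind (Fin.snoc p y) -
      ind (Fin.snoc p' y')) := by
  refine ⟨n + 1, by omega, by omega, Fin.snoc p y, Fin.snoc p' y', Fin.snoc p' y, Fin.snoc p y',
    ?_, ?_, ?_, rfl⟩
  · change Fin.snoc (α := fun _ => X) p y (Fin.castSucc (Fin.last n)) =
      Fin.snoc (α := fun _ => X) p' y' (Fin.castSucc (Fin.last n))
    simpa only [Fin.snoc_castSucc] using h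
  all_goals
    intro j
    refine Fin.lastCases (by simp) (fun k => ?_) j
    simp [Nat.not_lt.2 (Nat.lt_succ_iff.1 k.is_lt)]

theorem pushforward_init_mem_marginalKer {n : ℕ} {ν : (Fin (n + 1) → X) → ℝ}
    (hν : ν ∈ marginalKer X (n + 1)) :
    pushforward ℝ (Fin.init : (Fin (n + 1) → X) → Fin n → X) ν ∈ marginalKer X n := by
  rw [mem_marginalKer] at hν ⊢
  refine ⟨fun h => ?_, fun i h => ?_⟩
  · rw [← LinearMap.comp_apply, ← pushforward_comp]
    exact hν.1 (by omega)
  · rw [← LinearMap.comp_apply, ← pushforward_comp]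
    exact hν.2 i (by omega)

theorem sub_pushforward_snoc_init_mem_ryserSpaceDC {n : ℕ} {ν : (Fin (n + 2) → X) → ℝ}
    (hν : ν ∈ marginalKer X (n + 2)) (x : X) :
    ν - pushforward ℝ (fun c : Fin (n + 2) → X => (Fin.snoc (Fin.init c) x : Fin (n + 2) → X)) ν ∈
      RyserSpaceDC X (n + 2) := by
  set r : (Fin (n + 2) → X) → Fin (n + 2) → X := fun c => Fin.snoc (Fin.init c) x
  set pair := choicePair (X := X) n (by omega : n + 1 < n + 2)
  set g : X × X → Fin (n + 2) → X := fun yz => Fin.snoc (fun _ => yz.1) yz.2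
  set g' : X × X → Fin (n + 2) → X := fun yz => Fin.snoc (fun _ => yz.1) x
  -- exchanges the first `n + 1` periods of `c` and of `g' (pair c)`
  set swap := fun c => ind (g (pair c)) + ind (r c) - ind c - ind (g' (pair c))
  have hswap : ∀ c, IsRyserSwapDC (swap c) := fun c => by
    have h := isRyserSwapDC_snoc (p := Fin.init c) (p' := fun _ => (pair c).1) rfl
      (c (Fin.last _)) x
    rwa [Fin.snoc_init_self] at h
  have hpair : pushforward ℝ pair ν = 0 := (mem_marginalKer.1 hν).2 n _
  have hsum : ∑ c, ν c • swap c = -(ν - pushforward ℝ r ν) := by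
    have h : ∑ c, ν c • swap c = pushforward ℝ (g ∘ pair) ν + pushforward ℝ r ν - ν -
        pushforward ℝ (g' ∘ pair) ν := by
      simp only [swap, smul_add, smul_sub, smul_ind, Finset.sum_add_distrib,
        Finset.sum_sub_distrib, pushforward_eq_sum_single, Finset.univ_sum_single,
        Function.comp_apply]
    rw [h, pushforward_comp_apply_eq_zero g hpair, pushforward_comp_apply_eq_zero g' hpair]
    abel
  rw [← neg_neg (ν - _), ← hsum]
  exact neg_mem (sum_mem fun c _ => Submodule.smul_mem _ _ (Submodule.subset_span (hswap c)))

theorem marginalKer_le_ryserSpaceDC : ∀ n : ℕ, marginalKer X (n + 1) ≤ RyserSpaceDC X (n + 1)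
  | 0, ν, hν => by
    have hinj : (firstChoice (X := X) (T := 1) one_pos).Injective := fun c c' h =>
      funext fun j => by rwa [Subsingleton.elim j ⟨0, one_pos⟩]
    rw [eq_zero_of_pushforward_eq_zero hinj ((mem_marginalKer.1 hν).1 one_pos)]
    exact zero_mem _
  | n + 1, ν, hν => by
    rcases isEmpty_or_nonempty X with hX | ⟨⟨x⟩⟩
    · rw [Subsingleton.elim ν 0]
      exact zero_mem _
    have hlift := pushforward_snoc_mem_ryserSpaceDC
      (marginalKer_le_ryserSpaceDC n (pushforward_init_mem_marginalKer hν)) x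
    rw [← LinearMap.comp_apply, ← pushforward_comp, Function.comp_def] at hlift
    simpa only [add_sub_cancel] using
      add_mem hlift (sub_pushforward_snoc_init_mem_ryserSpaceDC hν x)

theorem ryserSpaceDC_eq_marginalKer (n : ℕ) : RyserSpaceDC X (n + 1) = marginalKer X (n + 1) :=
  ryserSpaceDC_le_marginalKer.antisymm (marginalKer_le_ryserSpaceDC n)

theorem IsDist.eq_of_subsingleton [Subsingleton (Fin T → X)] {μ μ' : (Fin T → X) → ℝ}
    (hμ : IsDist μ) (hμ' : IsDist μ') : μ = μ' := by
  ext c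
  have h := hμ.2
  have h' := hμ'.2
  rw [Fintype.sum_subsingleton _ c] at h h'
  rw [h, h']

theorem obsEquivDC_iff_sub_mem_ryserSpaceDC {μ μ' : (Fin T → X) → ℝ} (hμ : IsDist μ)
    (hμ' : IsDist μ') : ObsEquivDC μ μ' ↔ μ - μ' ∈ RyserSpaceDC X T := by
  rw [obsEquivDC_iff_sub_mem_marginalKer]
  cases T with
  | zero => simp [hμ.eq_of_subsingleton hμ']
  | succ n => rw [ryserSpaceDC_eq_marginalKer]

theorem statement9 :
    (∀ μ μ' : (Fin T → X) → ℝ, IsDist μ → IsDist μ' →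
      (ObsEquivDC μ μ' ↔ μ - μ' ∈ RyserSpaceDC X T)) ∧
    (∀ M : Set ((Fin T → X) → ℝ), (∀ μ ∈ M, IsDist μ) → ∀ μ ∈ M,
      {ν | ν ∈ M ∧ ObsEquivDC μ ν} =
        {ν | (∃ r ∈ RyserSpaceDC X T, ν = μ + r) ∧ ν ∈ M}) := by
  refine ⟨fun μ μ' => obsEquivDC_iff_sub_mem_ryserSpaceDC, fun M hM μ hμ => ?_⟩
  ext ν
  simp only [Set.mem_ofPred_eq]
  constructor
  · rintro ⟨hν, hobs⟩
    have hr := neg_mem ((obsEquivDC_iff_sub_mem_ryserSpaceDC (hM μ hμ) (hM ν hν)).1 hobs)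
    exact ⟨⟨ν - μ, by simpa using hr, by abel⟩, hν⟩
  · rintro ⟨⟨r, hr, rfl⟩, hν⟩
    refine ⟨hν, (obsEquivDC_iff_sub_mem_ryserSpaceDC (hM μ hμ) (hM _ hν)).2 ?_⟩
    simpa using neg_mem hr

end Stmt9
end

section
/- (Zipper Lemma 1) Let π, π' be path decompositions of a common quasi-flow f on a directed acyclic graph. Let P ∈ supp(π), let {P_u}_{u=1}^U ⊆ supp(π'), and suppose for some fixed 1 ≤ k̄ < |P| that s↑_{k̄}(P) = s↑_{k̄}(P_u) for each u. If π(P) ≤ Σ_{u=1}^U π'(P_u), then there exist a finite sequence of weighted Ryser swaps (c_v R_v)_{v=1}^V and a finite set of paths {P_w}_{w=1}^W with s↑_{k̄+1}(P) = s↑_{k̄+1}(P_w) for all w, such that π(P) ≤ Σ_{w=1}^W ( π'(P_w) + Σ_{v=1}^V c_v ⟨R_v, e_{P_w}⟩ ), where e_{P_w} denotes the P_w-th standard basis vector of ℝ^𝒫. -/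
open scoped Classical

namespace StmtDAG

variable {N E : Type*} [Fintype N] [Fintype E] [DecidableEq N] [DecidableEq E]

/-- `(src, tgt, s, t)` describes a directed acyclic graph with finite node type `N` and
finite edge type `E` (parallel edges are allowed, since `E` is an abstract type with
endpoint maps): there is no directed cycle, `s` is the unique node with no incoming edge
(the source), and `t` is the unique node with no outgoing edge (the sink). -/
def IsDAG (src tgt : E → N) (s t : N) : Prop :=
  (∀ a : N, ¬ Relation.TransGen (fun a b => ∃ e, src e = a ∧ tgt e = b) a a) ∧
  (∀ e, tgt e ≠ s) ∧ (∀ e, src e ≠ t) ∧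
  (∀ n, (∀ e, tgt e ≠ n) → n = s) ∧
  (∀ n, (∀ e, src e ≠ n) → n = t)

variable (src tgt : E → N) (s t : N)

/-- A path from `s` to `t`: a nonempty list of consecutive edges starting at `s` and
ending at `t`.  (In a DAG these are in bijective correspondence with the edge *sets* in
which `s` and `t` each appear exactly once and every other node appearing at all appears
exactly once as a head and once as a tail.) -/
structure GPath where
  /-- the edges of the path, in order from the source to the sink -/
  edges : List E
  ne : edges ≠ []
  chain : edges.Chain' fun e f => tgt e = src f
  first : src (edges.head ne) = s
  last : tgt (edges.getLast ne) = t

/-- A quasi-flow: a nonnegative edge weighting such that, at every node other than the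
source and the sink, total in-flow equals total out-flow. -/
def IsQuasiFlow (f : E → ℝ) : Prop :=
  (∀ e, 0 ≤ f e) ∧
  ∀ n : N, n ≠ s → n ≠ t →
    (∑ e : E, if tgt e = n then f e else 0) = (∑ e : E, if src e = n then f e else 0)

/-- `π` is a path decomposition of the quasi-flow `f`: a nonnegative weighting of paths
whose induced edge weights recover `f`. -/
def IsPathDecomp (f : E → ℝ) (π : GPath src tgt s t → ℝ) : Prop :=
  (∀ P, 0 ≤ π P) ∧
  ∀ e : E, f e = ∑ᶠ P : GPath src tgt s t, if e ∈ P.edges then π P else 0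

/-- `P.edges = a ++ b`, split exactly at the node `n`. -/
def SplitsAt (P : GPath src tgt s t) (n : N) (a b : List E) : Prop :=
  P.edges = a ++ b ∧ (∀ h : b ≠ [], src (b.head h) = n) ∧ (b = [] → n = t)

/-- `(Q₁, Q₂)` are the `n`-conjugates of the pair `(P₁, P₂)`, both of which pass through
the node `n`: `Q₁` follows `P₁` up to `n` and `P₂` thereafter, and vice versa. -/
def IsConjAt (n : N) (P₁ P₂ Q₁ Q₂ : GPath src tgt s t) : Prop :=
  ∃ a₁ b₁ a₂ b₂ : List E,
    SplitsAt src tgt s t P₁ n a₁ b₁ ∧ SplitsAt src tgt s t P₂ n a₂ b₂ ∧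
    Q₁.edges = a₁ ++ b₂ ∧ Q₂.edges = a₂ ++ b₁

/-- The indicator (point mass) vector of a path. -/
noncomputable def indP (P₀ : GPath src tgt s t) : GPath src tgt s t → ℝ :=
  fun P => if P = P₀ then 1 else 0

/-- A Ryser swap: `1_{Q₁} + 1_{Q₂} - 1_{P₁} - 1_{P₂}` where `(Q₁, Q₂)` are the
`n`-conjugates of a pair `(P₁, P₂)` compatible at some node `n`. -/
def IsRyserSwap (R : GPath src tgt s t → ℝ) : Prop :=
  ∃ (n : N) (P₁ P₂ Q₁ Q₂ : GPath src tgt s t),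
    IsConjAt src tgt s t n P₁ P₂ Q₁ Q₂ ∧
    R = indP src tgt s t Q₁ + indP src tgt s t Q₂ -
          indP src tgt s t P₁ - indP src tgt s t P₂

/-- The Ryser subspace: the linear span of all Ryser swaps. -/
noncomputable def RyserSub : Submodule ℝ (GPath src tgt s t → ℝ) :=
  Submodule.span ℝ {R | IsRyserSwap src tgt s t R}

/-- `π` is a probability distribution on the path set. -/
def IsDistP (π : GPath src tgt s t → ℝ) : Prop :=
  (∀ P, 0 ≤ π P) ∧ ∑ᶠ P : GPath src tgt s t, π P = 1


/-! Let `e` be the `(k̄+1)`-st edge of `P` and `n` its tail. As `π` and `π'` decompose the same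
flow, `π P ≤ f e = ∑_{Q ∋ e} π' Q`. If every `P_u` already starts with `s↑_{k̄+1}(P)` there is
nothing to do. Otherwise some `P_u` leaves `n` by an edge other than `e`; swap it at `n` with
every path `Q ∋ e` lacking that prefix, with weight `π' Q`. Of the four paths of such a swap only
the conjugate following `P_u` to `n` and `Q` afterwards has the prefix, so on paths with the prefix
the swaps add exactly the missing weight. Acyclicity, which lets a path pass through `n` only
once, is what makes the conjugates behave this way. -/

section

omit [Fintype N] [Fintype E] [DecidableEq N] [DecidableEq E]

variable {src tgt s t}

theorem GPath.ext {P Q : GPath src tgt s t} (h : P.edges = Q.edges) : P = Q := by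
  cases P; cases Q; cases h; rfl

theorem GPath.isChain (P : GPath src tgt s t) :
    P.edges.IsChain (fun e f => tgt e = src f) :=
  P.chain

theorem transGen_src_of_isChain {y x : E} {m b : List E}
    (hc : (y :: m ++ x :: b).IsChain (fun e f => tgt e = src f)) :
    Relation.TransGen (fun a b => ∃ e, src e = a ∧ tgt e = b) (src y) (src x) := by
  induction m generalizing y with
  | nil => exact .single ⟨y, rfl, (List.isChain_cons_cons.mp hc).1⟩
  | cons z m ih =>
    obtain ⟨hyz, hc⟩ := List.isChain_cons_cons.mp hc
    exact .head ⟨y, rfl, hyz⟩ (ih hc)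

theorem eq_nil_of_isChain_of_src_eq (hdag : IsDAG src tgt s t) {x y : E} {b m b' : List E}
    (hc : (x :: b).IsChain (fun e f => tgt e = src f)) (hb : x :: b = m ++ y :: b')
    (hxy : src x = src y) : m = [] := by
  cases m with
  | nil => rfl
  | cons z m =>
    obtain ⟨rfl, rfl⟩ := List.cons_eq_cons.mp hb
    exact absurd (hxy ▸ transGen_src_of_isChain hc) (hdag.1 _)

theorem nodup_of_isChain (hdag : IsDAG src tgt s t) :
    ∀ {l : List E}, l.IsChain (fun e f => tgt e = src f) → l.Nodup
  | [], _ => List.nodup_nil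
  | e :: r, hc => by
    refine List.nodup_cons.mpr ⟨fun he => ?_, nodup_of_isChain hdag hc.tail⟩
    obtain ⟨a, b, rfl⟩ := List.append_of_mem he
    exact hdag.1 _ (transGen_src_of_isChain hc)

theorem GPath.eq_of_edges_eq_append_cons (hdag : IsDAG src tgt s t) (Q : GPath src tgt s t)
    {a a' b b' : List E} {x y : E} (h : Q.edges = a ++ x :: b) (h' : Q.edges = a' ++ y :: b')
    (hxy : src x = src y) : a = a' ∧ x :: b = y :: b' := by
  rcases List.append_eq_append_iff.mp (h.symm.trans h') with ⟨m, rfl, hm⟩ | ⟨m, rfl, hm⟩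
  · obtain rfl := eq_nil_of_isChain_of_src_eq hdag (h ▸ Q.isChain).right_of_append hm hxy
    simpa using hm
  · obtain rfl := eq_nil_of_isChain_of_src_eq hdag (h' ▸ Q.isChain).right_of_append hm hxy.symm
    simpa using hm.symm

theorem GPath.exists_edges_eq_append_cons (P Q : GPath src tgt s t) {a b c d : List E}
    {x y : E} (hP : P.edges = a ++ x :: b) (hQ : Q.edges = c ++ y :: d) (hxy : src x = src y) :
    ∃ R : GPath src tgt s t, R.edges = a ++ y :: d := by
  have hlink : ∀ u ∈ a.getLast?, ∀ v ∈ (y :: d).head?, tgt u = src v := by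
    rintro u hu v ⟨⟩
    exact hxy ▸ (List.isChain_append.mp (hP ▸ P.isChain)).2.2 u hu x rfl
  have hfirst : src ((a ++ y :: d).head (by simp)) = s := by
    obtain ⟨pe, pne, _, pf, _⟩ := P
    subst hP
    cases a with
    | nil => simpa [← hxy] using pf
    | cons z a => simpa using pf
  have hlast : tgt ((a ++ y :: d).getLast (by simp)) = t := by
    obtain ⟨qe, qne, _, _, ql⟩ := Q
    subst hQ
    simpa [List.getLast_append_of_ne_nil] using ql
  exact ⟨⟨a ++ y :: d, by simp,
    .append (hP ▸ P.isChain).left_of_append (hQ ▸ Q.isChain).right_of_append hlink,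
    hfirst, hlast⟩, rfl⟩

theorem GPath.exists_eq_cons_of_common_prefix (hsink : ∀ e, src e ≠ t)
    (P Q : GPath src tgt s t) {a b d : List E} {x : E} (hP : P.edges = a ++ x :: b)
    (hQ : Q.edges = a ++ d) (ha : a ≠ []) : ∃ y d', Q.edges = a ++ y :: d' ∧ src y = src x := by
  have hx : tgt (a.getLast ha) = src x :=
    (hP ▸ P.isChain).rel_getLast_head_of_append ha (List.cons_ne_nil x b)
  cases d with
  | nil =>
    obtain ⟨qe, qne, _, _, ql⟩ := Q
    subst hQ
    exact absurd (hx ▸ by simpa using ql) (hsink x)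
  | cons y d =>
    have hy : tgt (a.getLast ha) = src y :=
      (hQ ▸ Q.isChain).rel_getLast_head_of_append ha (List.cons_ne_nil y d)
    exact ⟨y, d, hQ, hy.symm.trans hx⟩

theorem exists_isConjAt_of_mem (hdag : IsDAG src tgt s t) (X Q : GPath src tgt s t)
    {A r a b : List E} {x e : E} (hX : X.edges = A ++ x :: r) (hQ : Q.edges = a ++ e :: b)
    (hxe : src x = src e) (hne : x ≠ e) :
    ∃ T C : GPath src tgt s t, IsConjAt src tgt s t (src e) X Q T C ∧ A ++ [e] <+: T.edges ∧
      ¬ A ++ [e] <+: C.edges ∧ (A ++ [e] <+: Q.edges → T = Q) := by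
  obtain ⟨T, hT⟩ := X.exists_edges_eq_append_cons Q hX hQ hxe
  obtain ⟨C, hC⟩ := Q.exists_edges_eq_append_cons X hQ hX hxe.symm
  refine ⟨T, C, ⟨A, x :: r, a, e :: b, ⟨hX, fun _ => hxe, by simp⟩, ⟨hQ, fun _ => rfl, by simp⟩,
    hT, hC⟩, ⟨b, by simp [hT]⟩, ?_, ?_⟩
  · rintro ⟨r', hr'⟩
    have := C.eq_of_edges_eq_append_cons hdag hC (by simpa using hr'.symm) hxe
    exact hne (List.cons_eq_cons.mp this.2).1
  · rintro ⟨r', hr'⟩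
    obtain ⟨rfl, -⟩ := Q.eq_of_edges_eq_append_cons hdag hQ (by simpa using hr'.symm) rfl
    exact GPath.ext (hT.trans hQ.symm)

theorem GPath.finite [Fintype E] (hdag : IsDAG src tgt s t) : Finite (GPath src tgt s t) :=
  have : Finite {l : List E // l.length ≤ Fintype.card E} :=
    (List.finite_length_le E _).to_subtype
  Finite.of_injective
    (fun P => (⟨P.edges, (nodup_of_isChain hdag P.isChain).length_le_card⟩ :
      {l : List E // l.length ≤ Fintype.card E}))
    (fun _ _ h => GPath.ext (congrArg Subtype.val h))

theorem sum_le_sum_image_add {α : Type*} (S : Finset α) (p : α → Prop) [DecidablePred p]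
    (T : α → α) (w : α → ℝ) (hw : ∀ a, 0 ≤ w a) (hT : ∀ a ∈ S, p a → T a = a) :
    ∑ a ∈ S, w a ≤
      ∑ y ∈ S.image T, (w y + ∑ a ∈ S.filter (¬ p ·), w a * if y = T a then 1 else 0) := by
  have hsub : S.filter p ⊆ S.image T := fun a ha => by
    obtain ⟨haS, hpa⟩ := Finset.mem_filter.mp ha
    exact hT a haS hpa ▸ Finset.mem_image_of_mem T haS
  calc ∑ a ∈ S, w a = ∑ a ∈ S.filter p, w a + ∑ a ∈ S.filter (¬ p ·), w a :=
        (Finset.sum_filter_add_sum_filter_not S p w).symm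
    _ ≤ ∑ y ∈ S.image T, w y + ∑ a ∈ S.filter (¬ p ·), w a := by
        gcongr
        exact fun y _ _ => hw y
    _ = _ := by
        rw [Finset.sum_add_distrib, Finset.sum_comm]
        congr 1
        refine Finset.sum_congr rfl fun a ha => ?_
        rw [← Finset.mul_sum, Finset.sum_ite_eq' _ _ (fun _ => (1 : ℝ)),
          if_pos (Finset.mem_image_of_mem T (Finset.mem_filter.mp ha).1), mul_one]

theorem exists_fin_families_of_finset {π' : GPath src tgt s t → ℝ} {x : ℝ}
    (p : GPath src tgt s t → Prop) (B W : Finset (GPath src tgt s t)) (c : GPath src tgt s t → ℝ)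
    (R : GPath src tgt s t → GPath src tgt s t → ℝ) (hR : ∀ Q ∈ B, IsRyserSwap src tgt s t (R Q))
    (hW : ∀ Y ∈ W, p Y) (hx : x ≤ ∑ Y ∈ W, (π' Y + ∑ Q ∈ B, c Q * R Q Y)) :
    ∃ (V : ℕ) (c : Fin V → ℝ) (R : Fin V → (GPath src tgt s t → ℝ))
      (W : ℕ) (Pw : Fin W → GPath src tgt s t),
      (∀ v, IsRyserSwap src tgt s t (R v)) ∧ Function.Injective Pw ∧ (∀ w, p (Pw w)) ∧
      x ≤ ∑ w, (π' (Pw w) + ∑ v, c v * R v (Pw w)) := by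
  have hsum : ∀ (S : Finset (GPath src tgt s t)) (g : GPath src tgt s t → ℝ),
      ∑ i, g (S.equivFin.symm i) = ∑ Y ∈ S, g Y := fun S g =>
    (S.equivFin.symm.sum_comp (g ∘ Subtype.val)).trans (Finset.sum_coe_sort S g)
  refine ⟨B.card, fun v => c (B.equivFin.symm v), fun v => R (B.equivFin.symm v), W.card,
    fun w => W.equivFin.symm w, fun v => hR _ (B.equivFin.symm v).2,
    Subtype.val_injective.comp W.equivFin.symm.injective, fun w => hW _ (W.equivFin.symm w).2, ?_⟩
  refine hx.trans_eq ?_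
  rw [← hsum W]
  exact Finset.sum_congr rfl fun w _ => by rw [← hsum B]

theorem IsPathDecomp.apply_eq_sum [DecidableEq E] [Fintype (GPath src tgt s t)] {f : E → ℝ}
    {π : GPath src tgt s t → ℝ} (hπ : IsPathDecomp src tgt s t f π) (e : E) :
    f e = ∑ Q ∈ Finset.univ.filter (e ∈ ·.edges), π Q := by
  rw [hπ.2 e, finsum_eq_sum_of_fintype, Finset.sum_filter]

theorem IsPathDecomp.apply_le [DecidableEq E] [Fintype (GPath src tgt s t)] {f : E → ℝ}
    {π : GPath src tgt s t → ℝ} (hπ : IsPathDecomp src tgt s t f π) {P : GPath src tgt s t}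
    {e : E} (he : e ∈ P.edges) : π P ≤ f e := by
  rw [hπ.apply_eq_sum e]
  exact Finset.single_le_sum (fun Q _ => hπ.1 Q) (by simpa using he)

/-- Each path `Q` through `e` that lacks the prefix `A ++ [e]` is swapped with `X` at `src e`
with weight `π' Q`, which moves `π' Q` onto the conjugate of `Q` that has the prefix; and
`π P ≤ f e = ∑_{Q ∋ e} π' Q`. -/
theorem exists_finset_ryserSwaps [DecidableEq E] [Fintype (GPath src tgt s t)]
    (hdag : IsDAG src tgt s t) {f : E → ℝ} {π π' : GPath src tgt s t → ℝ}
    (hπ : IsPathDecomp src tgt s t f π) (hπ' : IsPathDecomp src tgt s t f π')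
    {P X : GPath src tgt s t} {A r : List E} {e x : E} (he : e ∈ P.edges)
    (hX : X.edges = A ++ x :: r) (hxe : src x = src e) (hne : x ≠ e) :
    ∃ (B W : Finset (GPath src tgt s t)) (R : GPath src tgt s t → GPath src tgt s t → ℝ),
      (∀ Q ∈ B, IsRyserSwap src tgt s t (R Q)) ∧ (∀ Y ∈ W, A ++ [e] <+: Y.edges) ∧
      π P ≤ ∑ Y ∈ W, (π' Y + ∑ Q ∈ B, π' Q * R Q Y) := by
  have hzip : ∀ Q : GPath src tgt s t, ∃ T C : GPath src tgt s t, e ∈ Q.edges →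
      IsConjAt src tgt s t (src e) X Q T C ∧ A ++ [e] <+: T.edges ∧
        ¬ A ++ [e] <+: C.edges ∧ (A ++ [e] <+: Q.edges → T = Q) := by
    intro Q
    by_cases hQ : e ∈ Q.edges
    · obtain ⟨a, b, hab⟩ := List.append_of_mem hQ
      obtain ⟨T, C, h⟩ := exists_isConjAt_of_mem hdag X Q hX hab hxe hne
      exact ⟨T, C, fun _ => h⟩
    · exact ⟨Q, Q, fun h => absurd h hQ⟩
  choose T C hTC using hzip
  set S := Finset.univ.filter (e ∈ ·.edges : GPath src tgt s t → Prop)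
  have hS : ∀ Q ∈ S, e ∈ Q.edges := fun Q hQ => (Finset.mem_filter.mp hQ).2
  have hXbad : ¬ A ++ [e] <+: X.edges := by simp [hX, hne.symm]
  set R := fun Q => indP src tgt s t (T Q) + indP src tgt s t (C Q) - indP src tgt s t X -
    indP src tgt s t Q
  have hR : ∀ Q ∈ S.filter (¬ A ++ [e] <+: ·.edges), ∀ Y ∈ S.image T,
      R Q Y = if Y = T Q then 1 else 0 := by
    intro Q hQ Y hY
    obtain ⟨hQS, hQbad⟩ := Finset.mem_filter.mp hQ
    obtain ⟨Q', hQ'S, rfl⟩ := Finset.mem_image.mp hY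
    have hgood := (hTC Q' (hS Q' hQ'S)).2.1
    have hC : T Q' ≠ C Q := fun h => (hTC Q (hS Q hQS)).2.2.1 (h ▸ hgood)
    have hX' : T Q' ≠ X := fun h => hXbad (h ▸ hgood)
    have hQ' : T Q' ≠ Q := fun h => hQbad (h ▸ hgood)
    simp [R, indP, hC, hX', hQ']
  refine ⟨S.filter (¬ A ++ [e] <+: ·.edges), S.image T, R,
    fun Q hQ => ⟨src e, X, Q, T Q, C Q, (hTC Q (hS Q (Finset.mem_filter.mp hQ).1)).1, rfl⟩,
    ?_, ?_⟩
  · simp only [Finset.mem_image]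
    rintro Y ⟨Q, hQ, rfl⟩
    exact (hTC Q (hS Q hQ)).2.1
  calc π P ≤ f e := hπ.apply_le he
    _ = ∑ Q ∈ S, π' Q := hπ'.apply_eq_sum e
    _ ≤ _ := sum_le_sum_image_add S _ T π' hπ'.1 fun Q hQ => (hTC Q (hS Q hQ)).2.2.2
    _ = _ := Finset.sum_congr rfl fun Y hY => by
        congr 1
        exact Finset.sum_congr rfl fun Q hQ => by rw [hR Q hQ Y hY]

end

theorem statement10 (hdag : IsDAG src tgt s t) (f : E → ℝ)
    (π π' : GPath src tgt s t → ℝ)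
    (hπ : IsPathDecomp src tgt s t f π) (hπ' : IsPathDecomp src tgt s t f π')
    (P : GPath src tgt s t)
    {U : ℕ} (Pu : Fin U → GPath src tgt s t) (hPuInj : Function.Injective Pu)
    (kbar : ℕ) (hk1 : 1 ≤ kbar) (hk2 : kbar < P.edges.length)
    (hinit : ∀ u, (Pu u).edges.take kbar = P.edges.take kbar)
    (hle : π P ≤ ∑ u, π' (Pu u)) :
    ∃ (V : ℕ) (c : Fin V → ℝ) (R : Fin V → (GPath src tgt s t → ℝ))
      (W : ℕ) (Pw : Fin W → GPath src tgt s t),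
      (∀ v, IsRyserSwap src tgt s t (R v)) ∧
      Function.Injective Pw ∧
      (∀ w, (Pw w).edges.take (kbar + 1) = P.edges.take (kbar + 1)) ∧
      π P ≤ ∑ w, (π' (Pw w) + ∑ v, c v * R v (Pw w)) := by
  by_cases hgood : ∀ u, (Pu u).edges.take (kbar + 1) = P.edges.take (kbar + 1)
  · exact ⟨0, Fin.elim0, Fin.elim0, U, Pu, fun v => v.elim0, hPuInj, hgood, by simpa using hle⟩
  obtain ⟨u, hu⟩ := not_forall.mp hgood
  set A := P.edges.take kbar
  set e := P.edges[kbar]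
  have hA : A.length = kbar := List.length_take_of_le hk2.le
  have hP : P.edges = A ++ e :: P.edges.drop (kbar + 1) := by
    rw [← List.drop_eq_getElem_cons hk2, List.take_append_drop]
  have htake : ∀ {l : List E}, A ++ [e] <+: l → l.take (kbar + 1) = P.edges.take (kbar + 1) :=
    fun hl => by
      have hPe : A ++ [e] <+: P.edges := ⟨_, by simpa using hP.symm⟩
      simpa [hA] using (List.prefix_iff_eq_take.mp hl).symm.trans (List.prefix_iff_eq_take.mp hPe)
  obtain ⟨x, r, hX, hxe⟩ := P.exists_eq_cons_of_common_prefix hdag.2.2.1 (Pu u) hP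
    (by rw [← hinit u, List.take_append_drop]) (List.ne_nil_of_length_pos (by omega))
  have hne : x ≠ e := by
    rintro rfl
    exact hu (htake ⟨r, by simp [hX]⟩)
  have := GPath.finite hdag
  cases nonempty_fintype (GPath src tgt s t)
  obtain ⟨B, W, R, hR, hW, hπP⟩ :=
    exists_finset_ryserSwaps hdag hπ hπ' (by rw [hP]; simp) hX hxe hne
  exact exists_fin_families_of_finset _ B W π' R hR (fun Y hY => htake (hW Y hY)) hπP

end StmtDAG
end

section
/- Fix a directed acyclic graph, a quasi-flow f, and a linear order ⊵ on the edge set E. Every swap-progressive path decomposition of f is an extreme point of the (convex) set of all path decompositions of f. -/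
open scoped Classical

namespace StmtDAG

variable {N E : Type*} [Fintype N] [Fintype E] [DecidableEq N] [DecidableEq E]

variable (src tgt : E → N) (s t : N)

/-- `π` is a swap-progressive path decomposition with respect to the linear order `tri`
on edges (`tri e₁ e₂` means `e₁ ⊵ e₂`): its support can be enumerated `P_1, …, P_K` so
that whenever `P_i` and `P_j` both pass through a node `n` and `i > j`, the edge of `P_i`
leaving `n` is `⊵`-greater than or equal to the edge of `P_j` leaving `n`. -/
def SwapProgG (tri : E → E → Prop) (π : GPath src tgt s t → ℝ) : Prop :=
  ∃ (K : ℕ) (en : Fin K → GPath src tgt s t), Function.Injective en ∧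
    Set.range en = {P | π P ≠ 0} ∧
    ∀ i j : Fin K, j < i → ∀ (n : N) (e₁ e₂ : E),
      e₁ ∈ (en i).edges → e₂ ∈ (en j).edges → src e₁ = n → src e₂ = n → tri e₁ e₂

/-!
Suppose `π` lies in the open segment between two path decompositions `x` and `y` of `f`.
By nonnegativity `x` is supported on the support `P₁, …, P_K` of `π`, so it suffices that the
incidence vectors of `P₁, …, P_K` are linearly independent. Given a vanishing combination,
let `P_m` be the last path with a nonzero coefficient and `P_j` the last one before it. Each
edge of `P_m` lies on some earlier path `P_i` with nonzero coefficient, and whenever `P_j`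
meets the tail of that edge with `i < j < m`, swap-progressivity squeezes the edge of `P_j`
leaving it between the two and forces it to be the same edge. Starting from `s`, `P_j` thus
contains all of `P_m`, and two `s`–`t` paths in a DAG one of which contains the other are equal.
-/

variable {src tgt s t}

section

omit [Fintype N] [Fintype E] [DecidableEq N] [DecidableEq E]

namespace GPath

variable (P : GPath src tgt s t)

theorem ext_edges {P Q : GPath src tgt s t} (h : P.edges = Q.edges) : P = Q := by
  cases P; cases Q; cases h; rfl

theorem src_getElem_zero (h : 0 < P.edges.length) : src P.edges[0] = s := by
  simpa [List.head_eq_getElem] using P.first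

theorem tgt_getElem_of_succ_eq_length {k : ℕ} (hk : k + 1 = P.edges.length) :
    tgt (P.edges[k]'(by omega)) = t := by
  simpa [List.getLast_eq_getElem, ← hk] using P.last

theorem tgt_getElem_eq_src_getElem_succ {k : ℕ} (hk : k + 1 < P.edges.length) :
    tgt P.edges[k] = src P.edges[k + 1] := by
  simpa using List.isChain_iff_getElem.1 P.chain k hk

theorem tgt_getElem_eq_sink_iff (ht : ∀ e, src e ≠ t) {k : ℕ} (hk : k < P.edges.length) :
    tgt P.edges[k] = t ↔ k + 1 = P.edges.length := by
  refine ⟨fun h => ?_, P.tgt_getElem_of_succ_eq_length⟩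
  by_contra hne
  exact ht _ ((P.tgt_getElem_eq_src_getElem_succ (by omega)).symm.trans h)

theorem exists_mem_src_eq_tgt {e : E} (he : e ∈ P.edges) (het : tgt e ≠ t) :
    ∃ g ∈ P.edges, src g = tgt e := by
  obtain ⟨k, hk, rfl⟩ := List.mem_iff_getElem.1 he
  have hk' : k + 1 < P.edges.length := by
    have := mt P.tgt_getElem_of_succ_eq_length het
    omega
  exact ⟨_, List.getElem_mem hk', (P.tgt_getElem_eq_src_getElem_succ hk').symm⟩

theorem transGen_src_getElem {i j : ℕ} (hij : i < j) (hj : j < P.edges.length) :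
    Relation.TransGen (fun a b => ∃ e, src e = a ∧ tgt e = b)
      (src P.edges[i]) (src P.edges[j]) := by
  induction j, hij using Nat.le_induction with
  | base => exact .single ⟨_, rfl, P.tgt_getElem_eq_src_getElem_succ hj⟩
  | succ j hij ih =>
    exact (ih (by omega)).tail ⟨_, rfl, P.tgt_getElem_eq_src_getElem_succ hj⟩

theorem eq_of_src_eq (hdag : IsDAG src tgt s t) {e₁ e₂ : E} (h₁ : e₁ ∈ P.edges)
    (h₂ : e₂ ∈ P.edges) (hs : src e₁ = src e₂) : e₁ = e₂ := by
  obtain ⟨i, hi, rfl⟩ := List.mem_iff_getElem.1 h₁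
  obtain ⟨j, hj, rfl⟩ := List.mem_iff_getElem.1 h₂
  rcases lt_trichotomy i j with h | rfl | h
  · exact absurd (hs ▸ P.transGen_src_getElem h hj) (hdag.1 _)
  · rfl
  · exact absurd (hs ▸ P.transGen_src_getElem h hi) (hdag.1 _)

theorem eq_of_edges_subset (hdag : IsDAG src tgt s t) {P Q : GPath src tgt s t}
    (h : P.edges ⊆ Q.edges) : P = Q := by
  have hget : ∀ k (hP : k < P.edges.length) (hQ : k < Q.edges.length),
      P.edges[k] = Q.edges[k] := by
    intro k
    induction k with
    | zero =>
      intro hP hQ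
      refine Q.eq_of_src_eq hdag (h (List.getElem_mem hP)) (List.getElem_mem hQ) ?_
      rw [P.src_getElem_zero, Q.src_getElem_zero]
    | succ k ih =>
      intro hP hQ
      refine Q.eq_of_src_eq hdag (h (List.getElem_mem hP)) (List.getElem_mem hQ) ?_
      rw [← P.tgt_getElem_eq_src_getElem_succ hP, ← Q.tgt_getElem_eq_src_getElem_succ hQ,
        ih (by omega) (by omega)]
  have hlen : P.edges.length = Q.edges.length := by
    have hP0 := List.length_pos_iff.2 P.ne
    have hQ0 := List.length_pos_iff.2 Q.ne
    set k := min P.edges.length Q.edges.length - 1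
    have hP : k < P.edges.length := by omega
    have hQ : k < Q.edges.length := by omega
    have := (P.tgt_getElem_eq_sink_iff hdag.2.2.1 hP).symm.trans
      (hget k hP hQ ▸ Q.tgt_getElem_eq_sink_iff hdag.2.2.1 hQ)
    omega
  exact ext_edges (List.ext_getElem hlen fun k hP hQ => hget k hP hQ)

theorem edges_subset_of_forall_mem (ht : ∀ e, src e ≠ t) {P Q : GPath src tgt s t}
    (h : ∀ e ∈ P.edges, ∀ g ∈ Q.edges, src g = src e → e ∈ Q.edges) :
    P.edges ⊆ Q.edges := by
  suffices ∀ k (hk : k < P.edges.length), P.edges[k] ∈ Q.edges by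
    intro e he
    obtain ⟨k, hk, rfl⟩ := List.mem_iff_getElem.1 he
    exact this k hk
  intro k
  induction k with
  | zero =>
    intro hk
    exact h _ (List.getElem_mem hk) _ (List.head_mem Q.ne)
      (Q.first.trans (P.src_getElem_zero hk).symm)
  | succ k ih =>
    intro hk
    have hstep := P.tgt_getElem_eq_src_getElem_succ hk
    obtain ⟨g, hg, hgsrc⟩ := Q.exists_mem_src_eq_tgt (ih (by omega)) (hstep ▸ ht _)
    exact h _ (List.getElem_mem hk) g hg (hgsrc.trans hstep)

end GPath

def IsSwapProgressiveEnumeration (tri : E → E → Prop) {K : ℕ}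
    (en : Fin K → GPath src tgt s t) : Prop :=
  ∀ i j : Fin K, j < i →
    ∀ e₁ ∈ (en i).edges, ∀ e₂ ∈ (en j).edges, src e₁ = src e₂ → tri e₁ e₂

theorem IsSwapProgressiveEnumeration.eq_of_lt_of_lt {tri : E → E → Prop}
    [Std.Antisymm tri] {K : ℕ} {en : Fin K → GPath src tgt s t}
    (hen : IsSwapProgressiveEnumeration tri en) {j₀ j₁ m : Fin K} (h₀₁ : j₀ < j₁)
    (h₁m : j₁ < m) {e g : E} (hem : e ∈ (en m).edges) (he : e ∈ (en j₀).edges)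
    (hg : g ∈ (en j₁).edges) (hsrc : src g = src e) : g = e :=
  antisymm (hen j₁ j₀ h₀₁ g hg e he hsrc) (hen m j₁ h₁m e hem g hg hsrc.symm)

end

theorem support_subset_of_mem_openSegment {ι : Type*} {x y z : ι → ℝ} (hx : ∀ i, 0 ≤ x i)
    (hy : ∀ i, 0 ≤ y i) (hz : z ∈ openSegment ℝ x y) :
    Function.support x ⊆ Function.support z := by
  obtain ⟨a, b, ha, hb, -, rfl⟩ := hz
  intro i hi
  have hxi : 0 < x i := (hx i).lt_of_ne' hi
  have : 0 < a * x i + b * y i := by nlinarith [hy i]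
  simpa using this.ne'

section

omit [Fintype N] [Fintype E] [DecidableEq N]

def GPath.incidence (P : GPath src tgt s t) : E → ℝ :=
  fun e => if e ∈ P.edges then 1 else 0

theorem exists_ne_mem_of_sum_smul_incidence_eq_zero {ι : Type*} [Fintype ι]
    {P : ι → GPath src tgt s t} {c : ι → ℝ} (hc : ∑ i, c i • (P i).incidence = 0)
    {m : ι} (hm : c m ≠ 0) {e : E} (he : e ∈ (P m).edges) :
    ∃ i ≠ m, c i ≠ 0 ∧ e ∈ (P i).edges := by
  by_contra! h
  have hsum := congrFun hc e
  rw [Finset.sum_apply, Finset.sum_eq_single m] at hsum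
  · simp [GPath.incidence, he, hm] at hsum
  · intro i _ hi
    by_cases hci : c i = 0
    · simp [hci]
    · simp [GPath.incidence, h i hi hci]
  · simp

namespace IsSwapProgressiveEnumeration

variable {tri : E → E → Prop} {K : ℕ} {en : Fin K → GPath src tgt s t}

theorem linearIndependent_incidence [Std.Antisymm tri] (hdag : IsDAG src tgt s t)
    (hinj : Function.Injective en) (hen : IsSwapProgressiveEnumeration tri en) :
    LinearIndependent ℝ fun i => (en i).incidence := by
  rw [Fintype.linearIndependent_iff]
  intro c hc
  by_contra! hne
  obtain ⟨m, hm, hmax⟩ := Finset.exists_max_image {i | c i ≠ 0} id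
    (by obtain ⟨i, hi⟩ := hne; exact ⟨i, by simpa using hi⟩)
  simp only [Finset.mem_filter, Finset.mem_univ, true_and, id] at hm hmax
  have cover : ∀ e ∈ (en m).edges, ∃ i < m, c i ≠ 0 ∧ e ∈ (en i).edges := fun e he => by
    obtain ⟨i, hi, hci, hei⟩ := exists_ne_mem_of_sum_smul_incidence_eq_zero hc hm he
    exact ⟨i, (hmax i hci).lt_of_ne hi, hci, hei⟩
  obtain ⟨j, hj, hjmax⟩ := Finset.exists_max_image {i | i < m ∧ c i ≠ 0} id (by
    obtain ⟨i, hi, hci, -⟩ := cover _ (List.head_mem (en m).ne)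
    exact ⟨i, by simp [hi, hci]⟩)
  simp only [Finset.mem_filter, Finset.mem_univ, true_and, id] at hj hjmax
  have hsub : (en m).edges ⊆ (en j).edges := by
    refine GPath.edges_subset_of_forall_mem hdag.2.2.1 fun e he g hg hgs => ?_
    obtain ⟨i, him, hci, hei⟩ := cover e he
    rcases (hjmax i ⟨him, hci⟩).lt_or_eq with hij | rfl
    · exact hen.eq_of_lt_of_lt hij hj.1 he hei hg hgs ▸ hg
    · exact hei
  exact hj.1.ne (hinj (GPath.eq_of_edges_subset hdag hsub)).symm

end IsSwapProgressiveEnumeration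

theorem IsPathDecomp.eq_sum_smul_incidence {f : E → ℝ} {x : GPath src tgt s t → ℝ}
    (hx : IsPathDecomp src tgt s t f x) {K : ℕ} {en : Fin K → GPath src tgt s t}
    (hinj : Function.Injective en) (hsupp : Function.support x ⊆ Set.range en) :
    f = ∑ i, x (en i) • (en i).incidence := by
  funext e
  rw [hx.2 e, Finset.sum_apply,
    finsum_eq_sum_of_support_subset _ (s := Finset.univ.map ⟨en, hinj⟩) ?_, Finset.sum_map]
  · simp [GPath.incidence]
  · intro P hP
    obtain ⟨i, rfl⟩ := hsupp (show x P ≠ 0 from fun h => hP (by simp [h]))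
    simp

theorem IsPathDecomp.eq_of_linearIndependent {f : E → ℝ} {x y : GPath src tgt s t → ℝ}
    (hx : IsPathDecomp src tgt s t f x) (hy : IsPathDecomp src tgt s t f y) {K : ℕ}
    {en : Fin K → GPath src tgt s t} (hinj : Function.Injective en)
    (hli : LinearIndependent ℝ fun i => (en i).incidence)
    (hxs : Function.support x ⊆ Set.range en) (hys : Function.support y ⊆ Set.range en) :
    x = y := by
  have hcoef := Fintype.linearIndependent_iffₛ.1 hli _ _
    ((hx.eq_sum_smul_incidence hinj hxs).symm.trans (hy.eq_sum_smul_incidence hinj hys))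
  funext P
  by_cases hP : P ∈ Set.range en
  · obtain ⟨i, rfl⟩ := hP
    exact hcoef i
  · rw [Function.notMem_support.1 (mt (@hxs P) hP),
      Function.notMem_support.1 (mt (@hys P) hP)]

end

variable (src tgt s t)

theorem statement19 (hdag : IsDAG src tgt s t) (f : E → ℝ)
    (tri : E → E → Prop) (htri : IsLinearOrder E tri)
    (π : GPath src tgt s t → ℝ)
    (hπ : IsPathDecomp src tgt s t f π) (hsp : SwapProgG src tgt s t tri π) :
    π ∈ Set.extremePoints ℝ {π' : GPath src tgt s t → ℝ |
      IsPathDecomp src tgt s t f π'} := by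
  obtain ⟨K, en, hinj, hrange, horder⟩ := hsp
  have hen : IsSwapProgressiveEnumeration tri en := fun i j hji e₁ h₁ e₂ h₂ hs =>
    horder i j hji _ e₁ e₂ h₁ h₂ rfl hs.symm
  have hli := hen.linearIndependent_incidence hdag hinj
  have hsupp : Function.support π = Set.range en := hrange.symm
  rw [mem_extremePoints_iff_left]
  refine ⟨hπ, fun x hx y hy hxy => ?_⟩
  exact hx.eq_of_linearIndependent hπ hinj hli
    (hsupp ▸ support_subset_of_mem_openSegment hx.1 hy.1 hxy) hsupp.le

end StmtDAG
end
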